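/- arXiv:2204.06209 — 12 statements merged into one kernel-verified Lean document; each statement's English description precedes it below -/
import Mathlib

section
/- Let K ⊆ ℝⁿ be a convex body and let z₀ be the midpoint of a segment contained in K whose length equals diam(K). Then α(K^{z₀}) ≤ 8/diam(K). In particular, inf_{z ∈ ℝⁿ} α(K^z) ≤ 8/diam(K) in every dimension. -/
open scoped ENNReal RealInnerProductSpace Pointwise

noncomputable section

variable {E : Type*} [NormedAddCommGroup E] [InnerProductSpace ℝ E]

/-- The polar body of `K` with respect to the point `z`:
`K^z = {y : ∀ x ∈ K, ⟪x - z, y⟫ ≤ 1}`. -/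
def polarBody (K : Set E) (z : E) : Set E :=
  {y | ∀ x ∈ K, ⟪x - z, y⟫ ≤ (1 : ℝ)}

/-- `q : ZMod m → E` is a closed generalized billiard trajectory of `K`:
the `q i` are points of `∂K`, consecutive points are distinct, and at each point the
change of (unit) direction is `-lam • nv` for some `lam > 0` and outer unit normal `nv`
of a supporting hyperplane of `K` at that point. -/
def IsClosedBilliardTraj (K : Set E) {m : ℕ} [NeZero m] (q : ZMod m → E) : Prop :=
  2 ≤ m ∧ (∀ i, q i ∈ frontier K) ∧ (∀ i : ZMod m, q (i + 1) ≠ q i) ∧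
    ∀ i : ZMod m, ∃ (lam : ℝ) (nv : E), 0 < lam ∧ ‖nv‖ = 1 ∧
      (∀ x ∈ K, ⟪x - q i, nv⟫ ≤ (0 : ℝ)) ∧
      ‖q (i + 1) - q i‖⁻¹ • (q (i + 1) - q i)
        - ‖q i - q (i - 1)‖⁻¹ • (q i - q (i - 1)) = -(lam • nv)

/-- The length (perimeter) of a closed polygonal trajectory. -/
def billiardLength {m : ℕ} [NeZero m] (q : ZMod m → E) : ℝ :=
  ∑ i : ZMod m, ‖q (i + 1) - q i‖

/-- `α(K)`: the infimum of the lengths of the closed generalized billiard trajectories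
inside `K`, equal to `∞` if there are none. -/
def alpha (K : Set E) : ℝ≥0∞ :=
  ⨅ (m : ℕ) (_ : NeZero m) (q : ZMod m → E) (_ : IsClosedBilliardTraj K q),
    ENNReal.ofReal (billiardLength q)

/-- The billiard product `β(K) = inf_z α(K) · α(K^z)`. -/
def billiardProduct (K : Set E) : ℝ≥0∞ :=
  ⨅ z : E, alpha K * alpha (polarBody K z)

/-! Let `z` be the midpoint of a diameter `[x, y]` of `K` and `w = y - z`. Every point of `K` is
within `‖x - y‖ = 2‖w‖` of both `x` and `y`, so `K` lies in the slab `|⟪p - z, w⟫| ≤ ‖w‖²`, which it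
touches at `x` and `y`. Dually, `K^z` lies in the slab `|⟪p, a⟫| ≤ ‖a‖²` for the inverse point
`a = w / ‖w‖²` and contains `±a`; the segment `[-a, a]` is then a two-bounce billiard orbit of
`K^z`, of length `4‖a‖ = 4 / ‖w‖ = 8 / diam K`. -/

open Filter Topology

lemma alpha_le_billiardLength {K : Set E} {m : ℕ} [inst : NeZero m] {q : ZMod m → E}
    (h : IsClosedBilliardTraj K q) : alpha K ≤ ENNReal.ofReal (billiardLength q) :=
  iInf_le_of_le m (iInf_le_of_le inst (iInf_le_of_le q (iInf_le _ h)))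

lemma mem_frontier_of_inner_sub_nonpos {S : Set E} {a v : E} (ha : a ∈ S) (hv : v ≠ 0)
    (hsupp : ∀ p ∈ S, ⟪p - a, v⟫ ≤ 0) : a ∈ frontier S := by
  refine ⟨subset_closure ha, fun hint => ?_⟩
  have hlim : Tendsto (fun t : ℝ => a + t • v) (𝓝[>] 0) (𝓝 a) :=
    ((continuous_const.add (continuous_id.smul continuous_const)).tendsto' 0 a
      (by simp)).mono_left nhdsWithin_le_nhds
  obtain ⟨t, htS, ht⟩ :=
    ((hlim.eventually (mem_interior_iff_mem_nhds.mp hint)).and self_mem_nhdsWithin).exists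
  have hpos : 0 < t * ‖v‖ ^ 2 := mul_pos ht (by positivity)
  have := hsupp _ htS
  rw [add_sub_cancel_left, real_inner_smul_left, real_inner_self_eq_norm_sq] at this
  linarith

/-- Since `i - 1 = i + 1` in `ZMod 2`, the incoming and outgoing directions at each point are
opposite, so the reflection law only asks for the chord to be an outer normal. -/
lemma isClosedBilliardTraj_of_zmod_two {S : Set E} {q : ZMod 2 → E}
    (hne : ∀ i, q (i + 1) ≠ q i) (hmem : ∀ i, q i ∈ S)
    (hsupp : ∀ i, ∀ p ∈ S, ⟪p - q i, q i - q (i + 1)⟫ ≤ 0) : IsClosedBilliardTraj S q := by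
  have hchord : ∀ i, q i - q (i + 1) ≠ 0 := fun i => sub_ne_zero.2 (hne i).symm
  refine ⟨le_rfl, fun i => mem_frontier_of_inner_sub_nonpos (hmem i) (hchord i) (hsupp i),
    hne, fun i => ⟨2, ‖q i - q (i + 1)‖⁻¹ • (q i - q (i + 1)), two_pos,
      norm_smul_inv_norm (hchord i), fun p hp => ?_, ?_⟩⟩
  · rw [real_inner_smul_right]
    exact mul_nonpos_of_nonneg_of_nonpos (by positivity) (hsupp i p hp)
  · rw [CharTwo.sub_eq_add, ← neg_sub (q i), norm_neg]
    module

lemma billiardLength_zmod_two {F : Type*} [NormedAddCommGroup F] (q : ZMod 2 → F) :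
    billiardLength q = 2 * ‖q 1 - q 0‖ := by
  have hsum : billiardLength q = ‖q (0 + 1) - q 0‖ + ‖q (1 + 1) - q 1‖ := Fin.sum_univ_two _
  rw [hsum, show (1 + 1 : ZMod 2) = 0 from rfl, zero_add, norm_sub_rev (q 0)]
  ring

def antipodalTraj {F : Type*} [Neg F] (a : F) : ZMod 2 → F := fun i => if i = 0 then a else -a

@[simp]
lemma antipodalTraj_zero {F : Type*} [Neg F] (a : F) : antipodalTraj a 0 = a := if_pos rfl

@[simp]
lemma antipodalTraj_one {F : Type*} [Neg F] (a : F) : antipodalTraj a 1 = -a :=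
  if_neg (by decide)

lemma isClosedBilliardTraj_antipodalTraj {S : Set E} {a : E} (ha₀ : a ≠ 0) (ha : a ∈ S)
    (hna : -a ∈ S) (hslab : ∀ p ∈ S, |⟪p, a⟫| ≤ ‖a‖ ^ 2) :
    IsClosedBilliardTraj S (antipodalTraj a) := by
  have hcases : ∀ i : ZMod 2, i = 0 ∨ i = 1 := by decide
  have hsucc : (1 + 1 : ZMod 2) = 0 := rfl
  have hne : -a ≠ a := by simpa [neg_eq_iff_add_eq_zero, ← two_smul ℝ a] using ha₀
  apply isClosedBilliardTraj_of_zmod_two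
  · intro i
    rcases hcases i with rfl | rfl
    · simpa using hne
    · simpa [hsucc] using hne.symm
  · intro i
    rcases hcases i with rfl | rfl <;> simpa
  · intro i p hp
    have hp := abs_le.1 (hslab p hp)
    rcases hcases i with rfl | rfl
    · rw [zero_add, antipodalTraj_zero, antipodalTraj_one, sub_neg_eq_add, inner_add_right,
        inner_sub_left, real_inner_self_eq_norm_sq]
      linarith
    · rw [hsucc, antipodalTraj_zero, antipodalTraj_one, sub_neg_eq_add, ← neg_add',
        inner_neg_right, inner_add_right, inner_add_left, real_inner_self_eq_norm_sq]
      linarith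

lemma billiardLength_antipodalTraj {F : Type*} [NormedAddCommGroup F] [NormedSpace ℝ F]
    (a : F) : billiardLength (antipodalTraj a) = 4 * ‖a‖ := by
  rw [billiardLength_zmod_two, antipodalTraj_zero, antipodalTraj_one, ← neg_add', norm_neg,
    ← two_smul ℝ a, norm_smul, Real.norm_two]
  ring

lemma inv_norm_sq_smul_mem_polarBody {K : Set E} {z w : E}
    (hK : ∀ p ∈ K, ⟪p - z, w⟫ ≤ ‖w‖ ^ 2) : (‖w‖ ^ 2)⁻¹ • w ∈ polarBody K z := by
  intro p hp
  rw [real_inner_smul_right]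
  rcases eq_or_ne w 0 with rfl | hw
  · simp
  · calc (‖w‖ ^ 2)⁻¹ * ⟪p - z, w⟫ ≤ (‖w‖ ^ 2)⁻¹ * ‖w‖ ^ 2 :=
          mul_le_mul_of_nonneg_left (hK p hp) (by positivity)
      _ = 1 := inv_mul_cancel₀ (by positivity)

lemma abs_inner_le_one_of_mem_polarBody {K : Set E} {z w p : E} (hplus : z + w ∈ K)
    (hminus : z - w ∈ K) (hp : p ∈ polarBody K z) : |⟪p, w⟫| ≤ 1 := by
  have h₁ := hp _ hplus
  have h₂ := hp _ hminus
  rw [add_sub_cancel_left, real_inner_comm] at h₁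
  rw [sub_sub_cancel_left, inner_neg_left, real_inner_comm] at h₂
  exact abs_le.2 ⟨by linarith, h₁⟩

lemma left_sub_midpoint_eq_neg {V : Type*} [AddCommGroup V] [Module ℝ V] (x y : V) :
    x - midpoint ℝ x y = -(y - midpoint ℝ x y) := by
  rw [left_sub_midpoint, right_sub_midpoint, ← smul_neg, neg_sub]

lemma inner_sub_midpoint_le {x y p : E} (h : dist p x ≤ dist x y) :
    ⟪p - midpoint ℝ x y, y - midpoint ℝ x y⟫ ≤ ‖y - midpoint ℝ x y‖ ^ 2 := by
  have hxw := left_sub_midpoint_eq_neg x y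
  set w := y - midpoint ℝ x y
  have hdist : dist x y = 2 * ‖w‖ := by
    rw [← dist_eq_norm, dist_right_midpoint, Real.norm_two]; ring
  have hcs : ⟪p - x, w⟫ ≤ 2 * ‖w‖ * ‖w‖ := by
    calc ⟪p - x, w⟫ ≤ ‖p - x‖ * ‖w‖ := real_inner_le_norm _ _
      _ ≤ 2 * ‖w‖ * ‖w‖ := by
        rw [← dist_eq_norm, ← hdist]; exact mul_le_mul_of_nonneg_right h (norm_nonneg w)
  rw [← sub_add_sub_cancel p x, inner_add_left, hxw, inner_neg_left,
    real_inner_self_eq_norm_sq]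
  linarith

lemma abs_inner_sub_midpoint_le_of_dist_eq_diam {K : Set E} (hK : Bornology.IsBounded K)
    {x y p : E} (hx : x ∈ K) (hy : y ∈ K) (hxy : dist x y = Metric.diam K) (hp : p ∈ K) :
    |⟪p - midpoint ℝ x y, y - midpoint ℝ x y⟫| ≤ ‖y - midpoint ℝ x y‖ ^ 2 := by
  have hle : ∀ {a}, a ∈ K → dist p a ≤ dist x y := fun ha =>
    hxy ▸ Metric.dist_le_diam_of_mem hK hp ha
  have hupper := inner_sub_midpoint_le (hle hx)
  have hlower := inner_sub_midpoint_le (p := p) (x := y) (y := x) (dist_comm x y ▸ hle hy)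
  rw [midpoint_comm, left_sub_midpoint_eq_neg, inner_neg_right, norm_neg] at hlower
  exact abs_le.2 ⟨by linarith, hupper⟩

theorem alpha_polarBody_midpoint_le {K : Set E} (hK : Bornology.IsBounded K) {x y : E}
    (hx : x ∈ K) (hy : y ∈ K) (hxy : dist x y = Metric.diam K) (hne : x ≠ y) :
    alpha (polarBody K (midpoint ℝ x y)) ≤ ENNReal.ofReal (8 / dist x y) := by
  have hxw := left_sub_midpoint_eq_neg x y
  set z := midpoint ℝ x y
  set w := y - z
  have hw : ‖w‖ = dist x y / 2 := by
    rw [← dist_eq_norm, dist_right_midpoint, Real.norm_two]; ring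
  have hw₀ : 0 < ‖w‖ := by rw [hw]; exact half_pos (dist_pos.2 hne)
  have hplus : z + w = y := add_sub_cancel z y
  have hminus : z - w = x := by rw [← neg_neg w, ← hxw, sub_neg_eq_add, add_sub_cancel]
  have hslab : ∀ p ∈ K, |⟪p - z, w⟫| ≤ ‖w‖ ^ 2 := fun p hp =>
    abs_inner_sub_midpoint_le_of_dist_eq_diam hK hx hy hxy hp
  set a := (‖w‖ ^ 2)⁻¹ • w
  have ha : ‖a‖ = ‖w‖⁻¹ := by
    rw [norm_smul, norm_inv, norm_pow, norm_norm]; field_simp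
  have hmem : a ∈ polarBody K z :=
    inv_norm_sq_smul_mem_polarBody fun p hp => (abs_le.1 (hslab p hp)).2
  have hnmem : -a ∈ polarBody K z := by
    have := inv_norm_sq_smul_mem_polarBody (K := K) (z := z) (w := -w) fun p hp => by
      rw [inner_neg_right, norm_neg]; linarith [(abs_le.1 (hslab p hp)).1]
    rwa [norm_neg, smul_neg] at this
  have hpolar : ∀ p ∈ polarBody K z, |⟪p, a⟫| ≤ ‖a‖ ^ 2 := fun p hp => by
    rw [real_inner_smul_right, abs_mul, ha, abs_of_pos (by positivity), inv_pow]
    exact mul_le_of_le_one_right (by positivity)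
      (abs_inner_le_one_of_mem_polarBody (hplus ▸ hy) (hminus ▸ hx) hp)
  have ha₀ : a ≠ 0 := norm_pos_iff.1 (by rw [ha]; positivity)
  calc alpha (polarBody K z) ≤ ENNReal.ofReal (billiardLength (antipodalTraj a)) :=
        alpha_le_billiardLength (isClosedBilliardTraj_antipodalTraj ha₀ hmem hnmem hpolar)
    _ = ENNReal.ofReal (8 / dist x y) := by
        rw [billiardLength_antipodalTraj, ha, hw]; congr 1; field_simp; ring

theorem alpha_polar_midpoint_diameter_le_general {n : ℕ} (K : Set (EuclideanSpace ℝ (Fin n)))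
    (hKcomp : IsCompact K)
    (x y : EuclideanSpace ℝ (Fin n)) (hx : x ∈ K) (hy : y ∈ K)
    (hxy : dist x y = Metric.diam K) :
    alpha (polarBody K (midpoint ℝ x y)) ≤ 8 / ENNReal.ofReal (Metric.diam K) ∧
      (⨅ z : EuclideanSpace ℝ (Fin n), alpha (polarBody K z))
        ≤ 8 / ENNReal.ofReal (Metric.diam K) := by
  suffices h : alpha (polarBody K (midpoint ℝ x y)) ≤ 8 / ENNReal.ofReal (Metric.diam K) from
    ⟨h, (iInf_le _ _).trans h⟩
  rcases eq_or_ne x y with rfl | hne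
  · rw [← hxy, dist_self, ENNReal.ofReal_zero, ENNReal.div_zero (by norm_num)]
    exact le_top
  · calc alpha (polarBody K (midpoint ℝ x y)) ≤ ENNReal.ofReal (8 / dist x y) :=
          alpha_polarBody_midpoint_le hKcomp.isBounded hx hy hxy hne
      _ = 8 / ENNReal.ofReal (Metric.diam K) := by
          rw [ENNReal.ofReal_div_of_pos (dist_pos.2 hne), hxy]; norm_num

/-- In every dimension, if `z₀` is the midpoint of a diameter of the convex
body `K`, then `α(K^{z₀}) ≤ 8 / diam K`; in particular `inf_z α(K^z) ≤ 8 / diam K`. -/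
theorem alpha_polar_midpoint_diameter_le {n : ℕ} (K : Set (EuclideanSpace ℝ (Fin n)))
    (hKconv : Convex ℝ K) (hKcomp : IsCompact K) (hKint : (interior K).Nonempty)
    (x y : EuclideanSpace ℝ (Fin n)) (hx : x ∈ K) (hy : y ∈ K)
    (hxy : dist x y = Metric.diam K) :
    alpha (polarBody K (midpoint ℝ x y)) ≤ 8 / ENNReal.ofReal (Metric.diam K) ∧
      (⨅ z : EuclideanSpace ℝ (Fin n), alpha (polarBody K z))
        ≤ 8 / ENNReal.ofReal (Metric.diam K) :=
  alpha_polar_midpoint_diameter_le_general K hKcomp x y hx hy hxy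
end
end

section
/- For every convex body K ⊆ ℝⁿ one has β(K) ≤ 16, where β(K) = inf_{z ∈ ℝⁿ} α(K)·α(K^z) is the billiard product. -/
open scoped ENNReal RealInnerProductSpace Pointwise

noncomputable section

variable {E : Type*} [NormedAddCommGroup E] [InnerProductSpace ℝ E]

lemma mem_frontier_of_support {K : Set E} (hK : IsClosed K) {q nv : E} (hq : q ∈ K)
    (hnv : nv ≠ 0) (h : ∀ x ∈ K, ⟪x - q, nv⟫ ≤ (0 : ℝ)) : q ∈ frontier K := by
  rw [frontier, hK.closure_eq]
  refine ⟨hq, fun hint => ?_⟩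
  rw [mem_interior_iff_mem_nhds, Metric.mem_nhds_iff] at hint
  obtain ⟨ε, hε, hball⟩ := hint
  have hnorm : (0 : ℝ) < ‖nv‖ := norm_pos_iff.2 hnv
  set δ : ℝ := ε / (2 * ‖nv‖) with hδ
  have hδpos : 0 < δ := by positivity
  have hx : q + δ • nv ∈ K := by
    apply hball
    rw [Metric.mem_ball, dist_eq_norm]
    have : q + δ • nv - q = δ • nv := by abel
    rw [this, norm_smul, Real.norm_eq_abs, abs_of_pos hδpos]
    have hmul : δ * ‖nv‖ = ε / 2 := by
      rw [hδ]; field_simp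
    rw [hmul]; linarith
  have hle := h _ hx
  have heq : q + δ • nv - q = δ • nv := by abel
  rw [heq, real_inner_smul_left, real_inner_self_eq_norm_sq] at hle
  have : 0 < δ * ‖nv‖ ^ 2 := by positivity
  linarith

lemma alpha_le_two_bounce {K : Set E} (hK : IsClosed K) {a b nv : E} {s : ℝ}
    (ha : a ∈ K) (hb : b ∈ K) (hs : 0 < s) (hnv : ‖nv‖ = 1) (hab : b - a = s • nv)
    (hsb : ∀ x ∈ K, ⟪x - b, nv⟫ ≤ (0 : ℝ)) (hsa : ∀ x ∈ K, ⟪x - a, -nv⟫ ≤ (0 : ℝ)) :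
    alpha K ≤ ENNReal.ofReal (2 * s) := by
  have hnv0 : nv ≠ 0 := by
    intro h; rw [h, norm_zero] at hnv; norm_num at hnv
  have hne : b ≠ a := by
    intro h
    rw [h, sub_self] at hab
    exact hnv0 (by simpa [smul_eq_zero, hs.ne'] using hab.symm)
  set q : ZMod 2 → E := fun i => if i = 0 then a else b with hq
  have q0 : q 0 = a := by simp [hq]
  have q1 : q 1 = b := by simp [hq]
  have hnba : ‖b - a‖ = s := by rw [hab, norm_smul, hnv, Real.norm_eq_abs, abs_of_pos hs, mul_one]
  have hnab : ‖a - b‖ = s := by rw [norm_sub_rev, hnba]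
  have hub : ‖b - a‖⁻¹ • (b - a) = nv := by
    rw [hnba, hab, smul_smul, inv_mul_cancel₀ hs.ne', one_smul]
  have hab' : a - b = -(s • nv) := by rw [← hab]; abel
  have hua : ‖a - b‖⁻¹ • (a - b) = -nv := by
    rw [hnab, hab', smul_neg, smul_smul, inv_mul_cancel₀ hs.ne', one_smul]
  have hcases : ∀ i : ZMod 2, i = 0 ∨ i = 1 := by decide
  have htraj : IsClosedBilliardTraj K q := by
    refine ⟨le_refl 2, ?_, ?_, ?_⟩
    · intro i
      rcases hcases i with rfl | rfl
      · rw [q0]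
        exact mem_frontier_of_support hK ha (by simpa using hnv0) hsa
      · rw [q1]
        exact mem_frontier_of_support hK hb hnv0 hsb
    · intro i
      rcases hcases i with rfl | rfl
      · rw [show (0 : ZMod 2) + 1 = 1 from by decide, q0, q1]; exact hne
      · rw [show (1 : ZMod 2) + 1 = 0 from by decide, q0, q1]; exact hne.symm
    · intro i
      rcases hcases i with rfl | rfl
      · refine ⟨2, -nv, by norm_num, by simpa using hnv, by rw [q0]; exact hsa, ?_⟩
        rw [show (0 : ZMod 2) + 1 = 1 from by decide, show (0 : ZMod 2) - 1 = 1 from by decide,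
          q0, q1, hub, hua]
        module
      · refine ⟨2, nv, by norm_num, hnv, by rw [q1]; exact hsb, ?_⟩
        rw [show (1 : ZMod 2) + 1 = 0 from by decide, show (1 : ZMod 2) - 1 = 0 from by decide,
          q0, q1, hub, hua]
        module
  have hlen : billiardLength q = 2 * s := by
    rw [billiardLength, show (Finset.univ : Finset (ZMod 2)) = {0, 1} from by decide,
      Finset.sum_insert (by decide), Finset.sum_singleton,
      show (0 : ZMod 2) + 1 = 1 from by decide, show (1 : ZMod 2) + 1 = 0 from by decide,
      q0, q1, hnba, hnab]
    ring
  calc alpha K ≤ ENNReal.ofReal (billiardLength q) := by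
        refine iInf_le_of_le 2 (iInf_le_of_le ⟨two_ne_zero⟩ ?_)
        exact iInf_le_of_le q (iInf_le_of_le htraj le_rfl)
    _ = ENNReal.ofReal (2 * s) := by rw [hlen]

set_option maxHeartbeats 1000000 in
/-- For every convex body `K ⊆ ℝⁿ`, `β(K) ≤ 16`. -/
theorem billiardProduct_le_sixteen {n : ℕ} (hn : 0 < n)
    (K : Set (EuclideanSpace ℝ (Fin n)))
    (hKconv : Convex ℝ K) (hKcomp : IsCompact K) (hKint : (interior K).Nonempty) :
    billiardProduct K ≤ 16 := by
  classical
  obtain ⟨x₀, hx₀⟩ := hKint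
  have hKcl : IsClosed K := hKcomp.isClosed
  have hKne : K.Nonempty := ⟨x₀, interior_subset hx₀⟩
  -- diameter pair
  obtain ⟨⟨b, a⟩, hpmem, hpmax⟩ := (hKcomp.prod hKcomp).exists_isMaxOn (hKne.prod hKne)
    ((continuous_fst.sub continuous_snd).norm.continuousOn)
  have hb : b ∈ K := hpmem.1
  have ha : a ∈ K := hpmem.2
  rw [isMaxOn_iff] at hpmax
  have hmax : ∀ x ∈ K, ∀ y ∈ K, ‖x - y‖ ≤ ‖b - a‖ := by
    intro x hx y hy
    exact hpmax (x, y) (Set.mk_mem_prod hx hy)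
  set s : ℝ := ‖b - a‖ with hsdef
  clear_value s
  -- s > 0
  have hs : 0 < s := by
    rw [mem_interior_iff_mem_nhds, Metric.mem_nhds_iff] at hx₀
    obtain ⟨ε, hε, hball⟩ := hx₀
    set v : EuclideanSpace ℝ (Fin n) := EuclideanSpace.single (⟨0, hn⟩ : Fin n) (1 : ℝ) with hv
    have hvnorm : ‖v‖ = 1 := by simp [hv]
    have hx₁ : x₀ + (ε / 2) • v ∈ K := by
      apply hball
      rw [Metric.mem_ball, dist_eq_norm]
      have : x₀ + (ε / 2) • v - x₀ = (ε / 2) • v := by abel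
      rw [this, norm_smul, hvnorm, Real.norm_eq_abs, abs_of_pos (by linarith), mul_one]
      linarith
    have := hmax _ hx₁ x₀ (hball (Metric.mem_ball_self hε))
    have heq : x₀ + (ε / 2) • v - x₀ = (ε / 2) • v := by abel
    rw [heq, norm_smul, hvnorm, Real.norm_eq_abs, abs_of_pos (by linarith), mul_one] at this
    linarith
  set u : EuclideanSpace ℝ (Fin n) := s⁻¹ • (b - a) with hudef
  clear_value u
  have hbu : b - a = s • u := by
    rw [hudef, smul_smul, mul_inv_cancel₀ hs.ne', one_smul]
  have hunorm : ‖u‖ = 1 := by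
    rw [hudef, norm_smul, Real.norm_eq_abs, abs_of_pos (inv_pos.2 hs), ← hsdef,
      inv_mul_cancel₀ hs.ne']
  -- supporting hyperplanes at b and a
  have hsb : ∀ x ∈ K, ⟪x - b, u⟫ ≤ (0 : ℝ) := by
    intro x hx
    have hd : ‖x - a‖ ≤ s := hmax x hx a ha
    have hexp : ‖x - a‖ ^ 2 = ‖x - b‖ ^ 2 + 2 * ⟪x - b, b - a⟫ + ‖b - a‖ ^ 2 := by
      have : x - a = (x - b) + (b - a) := by abel
      rw [this, norm_add_sq_real]
    have hkey : ⟪x - b, b - a⟫ ≤ (0 : ℝ) := by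
      have h1 : ‖x - a‖ ^ 2 ≤ s ^ 2 := by
        have := norm_nonneg (x - a); nlinarith
      rw [← hsdef] at hexp
      nlinarith [sq_nonneg ‖x - b‖]
    rw [hudef, real_inner_smul_right]
    exact mul_nonpos_of_nonneg_of_nonpos (inv_pos.2 hs).le hkey
  have hsa : ∀ x ∈ K, ⟪x - a, -u⟫ ≤ (0 : ℝ) := by
    intro x hx
    have hd : ‖x - b‖ ≤ s := hmax x hx b hb
    have hexp : ‖x - b‖ ^ 2 = ‖x - a‖ ^ 2 + 2 * ⟪x - a, a - b⟫ + ‖a - b‖ ^ 2 := by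
      have : x - b = (x - a) + (a - b) := by abel
      rw [this, norm_add_sq_real]
    have hkey : ⟪x - a, a - b⟫ ≤ (0 : ℝ) := by
      have h1 : ‖x - b‖ ^ 2 ≤ s ^ 2 := by
        have := norm_nonneg (x - b); nlinarith
      have h2 : ‖a - b‖ = s := by rw [norm_sub_rev, ← hsdef]
      rw [h2] at hexp
      nlinarith [sq_nonneg ‖x - a‖]
    have hmu : -u = s⁻¹ • (a - b) := by
      rw [hudef, ← smul_neg, neg_sub]
    rw [hmu, real_inner_smul_right]
    exact mul_nonpos_of_nonneg_of_nonpos (inv_pos.2 hs).le hkey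
  -- bound on alpha K
  have hαK : alpha K ≤ ENNReal.ofReal (2 * s) :=
    alpha_le_two_bounce hKcl ha hb hs hunorm hbu hsb hsa
  -- the polar body with respect to the midpoint
  set z : EuclideanSpace ℝ (Fin n) := (2 : ℝ)⁻¹ • (a + b) with hzdef
  clear_value z
  set L : Set (EuclideanSpace ℝ (Fin n)) := polarBody K z with hLdef
  clear_value L
  have hLcl : IsClosed L := by
    have : L = ⋂ x ∈ K, {y : EuclideanSpace ℝ (Fin n) | ⟪x - z, y⟫ ≤ (1 : ℝ)} := by
      ext y; simp [hLdef, polarBody]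
    rw [this]
    exact isClosed_biInter fun x _ =>
      isClosed_le (Continuous.inner continuous_const continuous_id) continuous_const
  have hbz : b - z = (2⁻¹ * s) • u := by
    have h0 : b - z = (2 : ℝ)⁻¹ • (b - a) := by rw [hzdef]; module
    rw [h0, hbu, smul_smul]
  have haz : a - z = -((2⁻¹ * s) • u) := by
    have h0 : a - z = -((2 : ℝ)⁻¹ • (b - a)) := by rw [hzdef]; module
    rw [h0, hbu, smul_smul]
  -- inner products with u along the slab
  have hxb : ∀ x ∈ K, ⟪x - z, u⟫ ≤ 2⁻¹ * s := by
    intro x hx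
    have : x - z = (x - b) + (b - z) := by abel
    rw [this, inner_add_left, hbz, real_inner_smul_left, real_inner_self_eq_norm_sq, hunorm]
    have := hsb x hx
    nlinarith
  have hxa : ∀ x ∈ K, -(2⁻¹ * s) ≤ ⟪x - z, u⟫ := by
    intro x hx
    have hxz : x - z = (x - a) + (a - z) := by abel
    rw [hxz, inner_add_left, haz, inner_neg_left, real_inner_smul_left,
      real_inner_self_eq_norm_sq, hunorm]
    have h := hsa x hx
    rw [inner_neg_right] at h
    nlinarith
  set c : ℝ := 2 / s with hcdef
  clear_value c
  have hc : 0 < c := by rw [hcdef]; positivity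
  set p1 : EuclideanSpace ℝ (Fin n) := c • u with hp1
  clear_value p1
  set p0 : EuclideanSpace ℝ (Fin n) := -(c • u) with hp0
  clear_value p0
  have hp1L : p1 ∈ L := by
    rw [hLdef]
    intro x hx
    rw [hp1, real_inner_smul_right, hcdef]
    have h := hxb x hx
    rw [div_mul_eq_mul_div, div_le_one hs]
    nlinarith
  have hp0L : p0 ∈ L := by
    rw [hLdef]
    intro x hx
    rw [hp0, inner_neg_right, real_inner_smul_right, hcdef]
    have h := hxa x hx
    have hd : s * (2 / s) = 2 := by field_simp
    nlinarith [div_pos (by norm_num : (0:ℝ) < 2) hs]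
  have hp1p0 : p1 - p0 = (2 * c) • u := by
    rw [hp1, hp0]; module
  have hsbL : ∀ y ∈ L, ⟪y - p1, u⟫ ≤ (0 : ℝ) := by
    intro y hy
    rw [hLdef] at hy
    have h := hy b hb
    rw [hbz, real_inner_smul_left] at h
    have h2 : ⟪u, y⟫ ≤ 2 / s := by rw [le_div_iff₀ hs]; nlinarith
    have h2' : ⟪y, u⟫ ≤ 2 / s := by rw [real_inner_comm]; exact h2
    rw [inner_sub_left, hp1, real_inner_smul_left, real_inner_self_eq_norm_sq, hunorm, hcdef]
    simp only [one_pow, mul_one]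
    linarith
  have hsaL : ∀ y ∈ L, ⟪y - p0, -u⟫ ≤ (0 : ℝ) := by
    intro y hy
    rw [hLdef] at hy
    have h := hy a ha
    rw [haz, inner_neg_left, real_inner_smul_left] at h
    have h2 : -2 ≤ s * ⟪u, y⟫ := by nlinarith
    have hd : s * (2 / s) = 2 := by field_simp
    have hexp : ⟪y - p0, -u⟫ = -⟪u, y⟫ - c := by
      rw [hp0, inner_neg_right, sub_neg_eq_add, inner_add_left, real_inner_smul_left,
        real_inner_self_eq_norm_sq, hunorm, real_inner_comm y u]
      ring
    rw [hexp, hcdef]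
    nlinarith
  have hαL : alpha L ≤ ENNReal.ofReal (2 * (2 * c)) :=
    alpha_le_two_bounce hLcl hp0L hp1L (by positivity) hunorm hp1p0 hsbL hsaL
  calc billiardProduct K ≤ alpha K * alpha (polarBody K z) := iInf_le _ z
    _ ≤ ENNReal.ofReal (2 * s) * ENNReal.ofReal (2 * (2 * c)) := by
        rw [← hLdef]; exact mul_le_mul' hαK hαL
    _ = ENNReal.ofReal ((2 * s) * (2 * (2 * c))) := (ENNReal.ofReal_mul (by positivity)).symm
    _ = ENNReal.ofReal 16 := by
        congr 1
        rw [hcdef]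
        field_simp
        ring
    _ = 16 := by norm_num
end
end

section
/- Let B ⊆ ℝⁿ be the closed Euclidean unit ball. Then β(B) = 16; more precisely, α(B) · α(B^z) ≥ 16 for every z in the interior of B, with equality when z is the center of B. -/
open scoped ENNReal RealInnerProductSpace Pointwise

noncomputable section

variable {E : Type*} [NormedAddCommGroup E] [InnerProductSpace ℝ E]

lemma sum_zmod {m : ℕ} [NeZero m] {M : Type*} [AddCommMonoid M] (f : ZMod m → M) :
    ∑ i : ZMod m, f i = ∑ i ∈ Finset.range m, f (i : ZMod m) := by
  refine Finset.sum_nbij' (fun i => i.val) (fun i => (i : ZMod m)) ?_ ?_ ?_ ?_ ?_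
  · simp [ZMod.val_lt]
  · simp
  · simp [ZMod.natCast_zmod_val]
  · intro a ha
    simp only [Finset.mem_range] at ha
    simp [ZMod.val_cast_of_lt ha]
  · simp [ZMod.natCast_zmod_val]

lemma chain_bound {m : ℕ} [NeZero m] (q : ZMod m → E) (u v : ℕ) (huv : u ≤ v) :
    ‖q (v : ZMod m) - q (u : ZMod m)‖
      ≤ ∑ i ∈ Finset.Ico u v, ‖q ((i : ZMod m) + 1) - q (i : ZMod m)‖ := by
  induction v, huv using Nat.le_induction with
  | base => simp
  | succ v huv ih =>
    rw [Finset.sum_Ico_succ_top huv]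
    have h1 : ‖q ((v + 1 : ℕ) : ZMod m) - q (u : ZMod m)‖
        ≤ ‖q (v : ZMod m) - q (u : ZMod m)‖ + ‖q ((v : ZMod m) + 1) - q (v : ZMod m)‖ := by
      have : ((v + 1 : ℕ) : ZMod m) = (v : ZMod m) + 1 := by push_cast; ring
      rw [this]
      have := norm_sub_le_norm_sub_add_norm_sub (q ((v : ZMod m) + 1)) (q (v : ZMod m)) (q (u : ZMod m))
      linarith [norm_sub_rev (q ((v:ZMod m)+1)) (q (v:ZMod m))]
    linarith

lemma exists_center {m : ℕ} [NeZero m] (q : ZMod m → E) :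
    ∃ p : E, ∀ j : ZMod m, ‖q j - p‖ ≤ billiardLength q / 4 := by
  classical
  set d : ℕ → ℝ := fun i => ‖q ((i : ZMod m) + 1) - q (i : ZMod m)‖ with hd
  set P : ℕ → ℝ := fun j => ∑ i ∈ Finset.range j, d i with hPdef
  have hd0 : ∀ i, 0 ≤ d i := fun i => hd ▸ norm_nonneg _
  clear_value d P
  set L : ℝ := billiardLength q with hLdef
  clear_value L
  have hLP : L = P m := by
    rw [hLdef, billiardLength, sum_zmod, hPdef, hd]
  have hL0 : 0 ≤ L := by
    rw [hLP, hPdef]; exact Finset.sum_nonneg fun i _ => hd0 i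
  have hPmono : ∀ u v : ℕ, u ≤ v → P u ≤ P v := by
    intro u v huv
    rw [hPdef]
    exact Finset.sum_le_sum_of_subset_of_nonneg (Finset.range_subset_range.2 huv)
      (fun i _ _ => hd0 i)
  have hchain : ∀ u v : ℕ, u ≤ v → ‖q (v : ZMod m) - q (u : ZMod m)‖ ≤ P v - P u := by
    intro u v huv
    have := chain_bound q u v huv
    rw [Finset.sum_Ico_eq_sub _ huv] at this
    rw [hPdef]
    simpa [hd] using this
  have hm : 0 < m := NeZero.pos m
  -- find the half-length index
  have hex : ∃ j, L / 2 ≤ P (j + 1) := by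
    refine ⟨m - 1, ?_⟩
    rw [show m - 1 + 1 = m by omega]
    rw [← hLP]; linarith
  set k := Nat.find hex with hk
  clear_value k
  have hk1 : L / 2 ≤ P (k + 1) := hk ▸ Nat.find_spec hex
  have hk2 : P k ≤ L / 2 := by
    rcases Nat.eq_zero_or_pos k with h0 | h0
    · rw [h0]
      have : P 0 = 0 := by rw [hPdef]; simp
      rw [this]; linarith
    · have := Nat.find_min hex (show k - 1 < Nat.find hex by omega)
      rw [show k - 1 + 1 = k by omega] at this
      linarith [not_le.1 this]
  have hkm : k < m := by
    have : k ≤ m - 1 := hk ▸ Nat.find_le (by rw [show m - 1 + 1 = m by omega, ← hLP]; linarith)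
    omega
  set s : ℝ := L / 2 - P k with hs
  clear_value s
  have hs0 : 0 ≤ s := by simp [hs]; linarith
  have hPk1 : P (k + 1) = P k + d k := by rw [hPdef]; exact Finset.sum_range_succ _ _
  have hsd : s ≤ d k := by simp [hs]; linarith
  set b : E := q (k : ZMod m) + (s / d k) • (q ((k : ZMod m) + 1) - q (k : ZMod m)) with hb
  clear_value b
  have hbk : ‖b - q (k : ZMod m)‖ = s := by
    rcases eq_or_lt_of_le (hd0 k) with h | h
    · have hs0' : s = 0 := le_antisymm (by rw [← h] at hsd; exact hsd) hs0
      simp [hb, hs0']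
    · rw [hb]
      simp only [add_sub_cancel_left]
      rw [norm_smul]
      have hthis : ‖q ((k : ZMod m) + 1) - q (k : ZMod m)‖ = d k := by rw [hd]
      rw [hthis, Real.norm_eq_abs, abs_of_nonneg (div_nonneg hs0 (le_of_lt h))]
      field_simp
  have hbk1 : ‖q ((k : ZMod m) + 1) - b‖ = d k - s := by
    rcases eq_or_lt_of_le (hd0 k) with h | h
    · have hs0' : s = 0 := le_antisymm (by rw [← h] at hsd; exact hsd) hs0
      have hdk : ‖q ((k : ZMod m) + 1) - q (k : ZMod m)‖ = d k := by rw [hd]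
      have hqq : q ((k : ZMod m) + 1) = q (k : ZMod m) := by
        rw [← sub_eq_zero, ← norm_eq_zero, hdk, ← h]
      rw [hb, hs0', hqq]
      simp [← h]
    · have key : q ((k : ZMod m) + 1) - b = (1 - s / d k) • (q ((k : ZMod m) + 1) - q (k : ZMod m)) := by
        rw [hb]; rw [sub_smul, one_smul, smul_sub]; abel
      rw [key, norm_smul]
      have hdk : ‖q ((k : ZMod m) + 1) - q (k : ZMod m)‖ = d k := by rw [hd]
      rw [hdk, Real.norm_eq_abs, abs_of_nonneg (by rw [sub_nonneg]; exact div_le_one_of_le₀ hsd (le_of_lt h))]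
      field_simp
  refine ⟨(2⁻¹ : ℝ) • (q ((0 : ℕ) : ZMod m) + b), fun j => ?_⟩
  have hsplit : q j - (2⁻¹ : ℝ) • (q ((0 : ℕ) : ZMod m) + b)
      = (2⁻¹ : ℝ) • ((q j - q ((0 : ℕ) : ZMod m)) + (q j - b)) := by
    module
  rw [hsplit, norm_smul]
  have key : ‖q j - q ((0 : ℕ) : ZMod m)‖ + ‖q j - b‖ ≤ L / 2 := by
    have hjq : q j = q ((j.val : ℕ) : ZMod m) := by rw [ZMod.natCast_zmod_val]
    rcases le_or_gt j.val k with hjk | hjk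
    · have h1 : ‖q j - q ((0 : ℕ) : ZMod m)‖ ≤ P j.val := by
        rw [hjq]
        have := hchain 0 j.val (Nat.zero_le _)
        have hP0 : P 0 = 0 := by rw [hPdef]; simp
        rw [hP0] at this
        linarith
      have h2 : ‖q j - b‖ ≤ (P k - P j.val) + s := by
        calc ‖q j - b‖ ≤ ‖q j - q (k : ZMod m)‖ + ‖q (k : ZMod m) - b‖ :=
              norm_sub_le_norm_sub_add_norm_sub _ _ _
          _ ≤ (P k - P j.val) + s := by
              rw [norm_sub_rev (q (k : ZMod m)) b, hbk]
              have h3 := hchain j.val k hjk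
              rw [← hjq] at h3
              rw [norm_sub_rev]
              set A := ‖q (k : ZMod m) - q j‖ with hA
              set Pj := P j.val with hPj'
              set Pk := P k with hPk'
              clear_value A Pj Pk
              linarith
      have hPj : 0 ≤ P j.val := by rw [hPdef]; exact Finset.sum_nonneg fun i _ => hd0 i
      set A := ‖q j - q ((0 : ℕ) : ZMod m)‖ with hA
      set B := ‖q j - b‖ with hB
      set Pj := P j.val with hPj'
      clear_value A B Pj
      linarith
    · have h2 : ‖q j - b‖ ≤ (P j.val - P (k + 1)) + (d k - s) := by
        calc ‖q j - b‖ ≤ ‖q j - q ((k + 1 : ℕ) : ZMod m)‖ + ‖q ((k + 1 : ℕ) : ZMod m) - b‖ :=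
              norm_sub_le_norm_sub_add_norm_sub _ _ _
          _ ≤ (P j.val - P (k + 1)) + (d k - s) := by
              have hcast : ((k + 1 : ℕ) : ZMod m) = (k : ZMod m) + 1 := by push_cast; ring
              have := hchain (k + 1) j.val hjk
              rw [← hjq] at this
              rw [hcast] at this
              rw [hcast, hbk1]
              set A := ‖q j - q ((k : ZMod m) + 1)‖ with hA
              set Pj := P j.val with hPj'
              set Pk1 := P (k + 1) with hPk1'
              clear_value A Pj Pk1
              linarith
      have h1 : ‖q j - q ((0 : ℕ) : ZMod m)‖ ≤ L - P j.val := by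
        have hjm : j.val ≤ m := le_of_lt (ZMod.val_lt j)
        have := hchain j.val m hjm
        have hqm : ((m : ℕ) : ZMod m) = ((0 : ℕ) : ZMod m) := by simp
        rw [hqm, ← hjq, norm_sub_rev] at this
        set A := ‖q j - q ((0 : ℕ) : ZMod m)‖ with hA
        set Pj := P j.val with hPj'
        set Pm := P m with hPm'
        clear_value A Pj Pm
        linarith
      set A := ‖q j - q ((0 : ℕ) : ZMod m)‖ with hA
      set B := ‖q j - b‖ with hB
      set Pj := P j.val with hPj'
      set Pk1 := P (k + 1) with hPk1'
      clear_value A B Pj Pk1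
      linarith
  rw [Real.norm_eq_abs]
  have : |(2⁻¹ : ℝ)| = 2⁻¹ := by norm_num
  rw [this]
  have hna := norm_add_le (q j - q ((0:ℕ) : ZMod m)) (q j - b)
  set A := ‖q j - q ((0:ℕ) : ZMod m) + (q j - b)‖ with hA
  set B := ‖q j - q ((0:ℕ) : ZMod m)‖ with hB
  set C := ‖q j - b‖ with hC
  clear_value A B C
  linarith

lemma no_translate {K : Set E} {m : ℕ} [NeZero m] {q : ZMod m → E}
    (h : IsClosedBilliardTraj K q) (t : E) (ht : ∀ i, q i + t ∈ interior K) : False := by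
  obtain ⟨hm, hfr, hne, hrefl⟩ := h
  choose lam nv hlam hnv hsupp heq using hrefl
  have key : ∀ i, ⟪t, nv i⟫ < 0 := by
    intro i
    obtain ⟨ε, hε, hball⟩ := Metric.isOpen_iff.1 isOpen_interior _ (ht i)
    have hmem : q i + t + (ε / 2) • nv i ∈ Metric.ball (q i + t) ε := by
      rw [Metric.mem_ball, dist_eq_norm]
      have : q i + t + (ε / 2) • nv i - (q i + t) = (ε / 2) • nv i := by abel
      rw [this, norm_smul, hnv i, Real.norm_eq_abs, abs_of_pos (by linarith)]
      linarith
    have hx : q i + t + (ε / 2) • nv i ∈ K := interior_subset (hball hmem)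
    have h2 := hsupp i _ hx
    have h3 : q i + t + (ε / 2) • nv i - q i = t + (ε / 2) • nv i := by abel
    rw [h3, inner_add_left, real_inner_smul_left, real_inner_self_eq_norm_sq, hnv i] at h2
    have : ⟪t, nv i⟫ ≤ -(ε / 2) := by nlinarith
    linarith
  -- telescoping sum of direction changes is zero
  have hsum : ∑ i : ZMod m, lam i • nv i = 0 := by
    have h1 : ∀ i : ZMod m, lam i • nv i
        = ‖q i - q (i - 1)‖⁻¹ • (q i - q (i - 1))
          - ‖q (i + 1) - q i‖⁻¹ • (q (i + 1) - q i) := by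
      intro i
      have := heq i
      have h2 : lam i • nv i = -(‖q (i + 1) - q i‖⁻¹ • (q (i + 1) - q i)
          - ‖q i - q (i - 1)‖⁻¹ • (q i - q (i - 1))) := by rw [this]; abel
      rw [h2]; abel
    rw [Finset.sum_congr rfl fun i _ => h1 i]
    rw [Finset.sum_sub_distrib, sub_eq_zero]
    exact Fintype.sum_equiv (Equiv.subRight (1 : ZMod m))
      (fun i => ‖q i - q (i - 1)‖⁻¹ • (q i - q (i - 1)))
      (fun i => ‖q (i + 1) - q i‖⁻¹ • (q (i + 1) - q i))
      (fun i => by simp [Equiv.subRight, sub_add_cancel])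
  have hzero : ∑ i : ZMod m, ⟪t, lam i • nv i⟫ = 0 := by
    rw [← inner_sum, hsum, inner_zero_right]
  have hneg : ∑ i : ZMod m, ⟪t, lam i • nv i⟫ < 0 := by
    refine Finset.sum_neg (fun i _ => ?_) Finset.univ_nonempty
    rw [real_inner_smul_right]
    exact mul_neg_of_pos_of_neg (hlam i) (key i)
  rw [hzero] at hneg
  exact lt_irrefl 0 hneg

lemma length_ge {K : Set E} {c : E} {r : ℝ} (hr : 0 < r) (hb : Metric.closedBall c r ⊆ K)
    {m : ℕ} [NeZero m] {q : ZMod m → E} (h : IsClosedBilliardTraj K q) :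
    4 * r ≤ billiardLength q := by
  by_contra hL
  push_neg at hL
  obtain ⟨p, hp⟩ := exists_center q
  refine no_translate h (c - p) fun i => ?_
  have hmem : q i + (c - p) ∈ Metric.ball c r := by
    rw [Metric.mem_ball, dist_eq_norm]
    have : q i + (c - p) - c = q i - p := by abel
    rw [this]
    calc ‖q i - p‖ ≤ billiardLength q / 4 := hp i
      _ < r := by linarith
  exact interior_maximal (Metric.ball_subset_closedBall.trans hb) Metric.isOpen_ball hmem

lemma alpha_ge {K : Set E} {c : E} {r : ℝ} (hr : 0 < r) (hb : Metric.closedBall c r ⊆ K) :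
    ENNReal.ofReal (4 * r) ≤ alpha K := by
  rw [alpha]
  refine le_iInf fun m => le_iInf fun hm => le_iInf fun q => le_iInf fun h => ?_
  exact ENNReal.ofReal_le_ofReal (length_ge hr hb h)

section Ball
variable {e : E} (he : ‖e‖ = 1)

/-- the two-bounce trajectory -/
def twoBounce (e : E) : ZMod 2 → E := fun i => if i = 0 then e else -e

include he

lemma twoBounce_traj : IsClosedBilliardTraj (Metric.closedBall (0 : E) 1) (twoBounce e) := by
  have he0 : e ≠ 0 := by intro h; rw [h] at he; simp at he
  haveI : Nontrivial E := nontrivial_of_ne e 0 he0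
  have hvals : ∀ i : ZMod 2, i = 0 ∨ i = 1 := by decide
  have h10 : (1 : ZMod 2) ≠ 0 := by decide
  have hq0 : twoBounce e 0 = e := if_pos rfl
  have hq1 : twoBounce e 1 = -e := if_neg h10
  have hne : e ≠ -e := by
    intro h
    have h2 : e + e = 0 := by nth_rewrite 1 [h]; exact neg_add_cancel e
    rw [← two_smul ℝ] at h2
    simp [smul_eq_zero, he0] at h2
  have hnorm2 : ‖(-e) - e‖ = 2 := by
    have : (-e) - e = (-2 : ℝ) • e := by module
    rw [this, norm_smul, he]; norm_num
  have hnorm2' : ‖e - (-e)‖ = 2 := by rw [norm_sub_rev]; exact hnorm2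
  refine ⟨le_refl 2, ?_, ?_, ?_⟩
  · intro i
    rw [frontier_closedBall 0 one_ne_zero]
    rcases hvals i with h | h <;> rw [h] <;>
      simp [hq0, hq1, mem_sphere_iff_norm, he]
  · intro i
    rcases hvals i with h | h <;> rw [h]
    · rw [show (0 : ZMod 2) + 1 = 1 by decide, hq0, hq1]
      exact fun hc => hne hc.symm
    · rw [show (1 : ZMod 2) + 1 = 0 by decide, hq0, hq1]
      exact hne
  · intro i
    have hsupp : ∀ s : ℝ, s = 1 ∨ s = -1 → ∀ x ∈ Metric.closedBall (0 : E) 1,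
        ⟪x - s • e, s • e⟫ ≤ (0 : ℝ) := by
      intro s hs x hx
      rw [Metric.mem_closedBall, dist_zero_right] at hx
      have hse : ‖s • e‖ = 1 := by
        rcases hs with h | h <;> rw [h] <;> simp [he]
      have h1 : ⟪x, s • e⟫ ≤ 1 := by
        calc ⟪x, s • e⟫ ≤ ‖x‖ * ‖s • e‖ := real_inner_le_norm _ _
          _ ≤ 1 := by rw [hse]; linarith
      have h2 : ⟪s • e, s • e⟫ = 1 := by
        rw [real_inner_self_eq_norm_sq, hse]; norm_num
      rw [inner_sub_left, h2]
      linarith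
    rcases hvals i with h | h <;> rw [h]
    · refine ⟨2, e, by norm_num, he, ?_, ?_⟩
      · have := hsupp 1 (Or.inl rfl)
        simpa [hq0] using this
      · rw [show (0 : ZMod 2) + 1 = 1 by decide, show (0 : ZMod 2) - 1 = 1 by decide,
          hq0, hq1, hnorm2, hnorm2']
        have h2 : ((2 : ℝ))⁻¹ • ((-e) - e) = -e := by
          rw [show (-e) - e = (-2 : ℝ) • e by module]; rw [smul_smul]; norm_num
        have h3 : ((2 : ℝ))⁻¹ • (e - (-e)) = e := by
          rw [show e - (-e) = (2 : ℝ) • e by module]; rw [smul_smul]; norm_num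
        rw [h2, h3]; module
    · refine ⟨2, -e, by norm_num, by rw [norm_neg]; exact he, ?_, ?_⟩
      · have := hsupp (-1) (Or.inr rfl)
        simpa [hq1] using this
      · rw [show (1 : ZMod 2) + 1 = 0 by decide, show (1 : ZMod 2) - 1 = 0 by decide,
          hq0, hq1, hnorm2, hnorm2']
        have h2 : ((2 : ℝ))⁻¹ • (e - (-e)) = e := by
          rw [show e - (-e) = (2 : ℝ) • e by module]; rw [smul_smul]; norm_num
        rw [h2]; module

lemma twoBounce_length : billiardLength (twoBounce e) = 4 := by
  have h10 : (1 : ZMod 2) ≠ 0 := by decide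
  have hq0 : twoBounce e 0 = e := if_pos rfl
  have hq1 : twoBounce e 1 = -e := if_neg h10
  have hnorm2 : ‖(-e) - e‖ = 2 := by
    have : (-e) - e = (-2 : ℝ) • e := by module
    rw [this, norm_smul, he]; norm_num
  have hnorm2' : ‖e - (-e)‖ = 2 := by rw [norm_sub_rev]; exact hnorm2
  rw [billiardLength, sum_zmod]
  rw [Finset.sum_range_succ, Finset.sum_range_succ, Finset.sum_range_zero]
  rw [show ((0 : ℕ) : ZMod 2) = 0 by norm_num, show ((1 : ℕ) : ZMod 2) = 1 by norm_num]
  rw [show (0 : ZMod 2) + 1 = 1 by decide, show (1 : ZMod 2) + 1 = 0 by decide,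
    hq0, hq1, hnorm2, hnorm2']
  norm_num

lemma alpha_unitBall : alpha (Metric.closedBall (0 : E) 1) = 4 := by
  refine le_antisymm ?_ ?_
  · have h1 : alpha (Metric.closedBall (0 : E) 1)
        ≤ ENNReal.ofReal (billiardLength (twoBounce e)) := by
      rw [alpha]
      refine iInf_le_of_le 2 (iInf_le_of_le ⟨by norm_num⟩ (iInf_le_of_le (twoBounce e)
        (iInf_le_of_le (twoBounce_traj he) le_rfl)))
    rw [twoBounce_length he] at h1
    calc alpha (Metric.closedBall (0 : E) 1) ≤ ENNReal.ofReal 4 := h1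
      _ = 4 := by norm_num
  · have := alpha_ge (r := 1) (c := (0 : E)) one_pos (le_refl _)
    calc (4 : ℝ≥0∞) = ENNReal.ofReal (4 * 1) := by norm_num
      _ ≤ _ := this
end Ball
lemma mem_polar_of_norm {z y : E} (h : ‖y‖ - ⟪z, y⟫ ≤ 1) :
    y ∈ polarBody (Metric.closedBall (0 : E) 1) z := by
  intro x hx
  rw [Metric.mem_closedBall, dist_zero_right] at hx
  rw [inner_sub_left]
  have h1 : ⟪x, y⟫ ≤ ‖y‖ := by
    calc ⟪x, y⟫ ≤ ‖x‖ * ‖y‖ := real_inner_le_norm _ _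
      _ ≤ ‖y‖ := by nlinarith [norm_nonneg y, norm_nonneg x]
  linarith

lemma norm_of_mem_polar {z y : E} (h : y ∈ polarBody (Metric.closedBall (0 : E) 1) z) :
    ‖y‖ - ⟪z, y⟫ ≤ 1 := by
  rcases eq_or_ne y 0 with h0 | h0
  · simp [h0]
  · have hy : 0 < ‖y‖ := norm_pos_iff.2 h0
    have hx : (‖y‖⁻¹ • y) ∈ Metric.closedBall (0 : E) 1 := by
      rw [Metric.mem_closedBall, dist_zero_right, norm_smul, Real.norm_eq_abs,
        abs_of_pos (inv_pos.2 hy), inv_mul_cancel₀ (ne_of_gt hy)]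
    have := h _ hx
    rw [inner_sub_left, real_inner_smul_left, real_inner_self_eq_norm_sq] at this
    have h2 : ‖y‖⁻¹ * ‖y‖ ^ 2 = ‖y‖ := by field_simp
    rw [h2] at this
    linarith

lemma polar_zero : polarBody (Metric.closedBall (0 : E) 1) 0 = Metric.closedBall (0 : E) 1 := by
  ext y
  constructor
  · intro h
    have := norm_of_mem_polar h
    rw [inner_zero_left] at this
    rw [Metric.mem_closedBall, dist_zero_right]
    linarith
  · intro h
    apply mem_polar_of_norm
    rw [inner_zero_left]
    rw [Metric.mem_closedBall, dist_zero_right] at h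
    linarith

/-- For `‖z‖ < 1`, the polar body contains a translated unit ball. -/
lemma ball_subset_polar {z : E} (hz : ‖z‖ < 1) :
    Metric.closedBall ((1 - ‖z‖ ^ 2)⁻¹ • z) 1 ⊆ polarBody (Metric.closedBall (0 : E) 1) z := by
  intro y hy
  rw [Metric.mem_closedBall, dist_eq_norm] at hy
  apply mem_polar_of_norm
  set s : ℝ := ‖z‖ with hs
  have hs0 : 0 ≤ s := norm_nonneg z
  have hs2 : 0 < 1 - s ^ 2 := by nlinarith
  set c : E := (1 - s ^ 2)⁻¹ • z with hc
  set w : E := y - c with hw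
  have hyw : y = c + w := by rw [hw]; abel
  have hw1 : ‖w‖ ≤ 1 := hy
  have hzw : |⟪z, w⟫| ≤ s * ‖w‖ := by
    rw [hs]; exact abs_real_inner_le_norm z w
  have hzy : ⟪z, y⟫ = (1 - s ^ 2)⁻¹ * s ^ 2 + ⟪z, w⟫ := by
    rw [hyw, inner_add_right, hc, real_inner_smul_right, real_inner_self_eq_norm_sq, ← hs]
  -- key: ‖y‖ ≤ 1 + ⟪z, y⟫
  have hy2 : ‖y‖ ^ 2 = (1 - s ^ 2)⁻¹ ^ 2 * s ^ 2 + 2 * (1 - s ^ 2)⁻¹ * ⟪z, w⟫ + ‖w‖ ^ 2 := by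
    rw [hyw, ← real_inner_self_eq_norm_sq, inner_add_add_self, real_inner_self_eq_norm_sq,
      real_inner_self_eq_norm_sq, hc, real_inner_smul_left, real_inner_smul_right,
      norm_smul, Real.norm_eq_abs, abs_of_pos (inv_pos.2 hs2), ← hs, real_inner_comm w z]
    ring
  have hApos : 0 < 1 + ⟪z, y⟫ := by
    rw [hzy]
    have h1 : (1 - s ^ 2)⁻¹ ≥ 1 := by
      rw [ge_iff_le, le_inv_comm₀]
      · nlinarith
      · norm_num
      · exact hs2
    nlinarith [abs_le.1 hzw, norm_nonneg w]
  have hsq : ‖y‖ ^ 2 ≤ (1 + ⟪z, y⟫) ^ 2 := by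
    rw [hy2, hzy]
    have hinv : (1 - s ^ 2) * (1 - s ^ 2)⁻¹ = 1 := mul_inv_cancel₀ (ne_of_gt hs2)
    nlinarith [abs_le.1 hzw, norm_nonneg w, sq_nonneg (⟪z, w⟫), sq_nonneg (s * ‖w‖),
      inv_pos.2 hs2]
  nlinarith [norm_nonneg y]

lemma polar_closed (K : Set E) (z : E) : IsClosed (polarBody K z) := by
  have : polarBody K z = ⋂ x ∈ K, {y : E | ⟪x - z, y⟫ ≤ (1 : ℝ)} := by
    ext y; simp [polarBody, Set.mem_iInter]
  rw [this]
  exact isClosed_biInter fun x _ =>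
    isClosed_le (Continuous.inner continuous_const continuous_id) continuous_const

lemma far_step {z : E} (hz : 1 ≤ ‖z‖) {y : E}
    (hy : y ∈ polarBody (Metric.closedBall (0 : E) 1) z) :
    y + z ∈ interior (polarBody (Metric.closedBall (0 : E) 1) z) := by
  set U : Set E := {v : E | ‖v‖ - ⟪z, v⟫ < 1} with hU
  have hUopen : IsOpen U := by
    have : Continuous fun v : E => ‖v‖ - ⟪z, v⟫ :=
      continuous_norm.sub (Continuous.inner continuous_const continuous_id)
    exact isOpen_lt this continuous_const
  have hUsub : U ⊆ polarBody (Metric.closedBall (0 : E) 1) z := fun v hv =>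
    mem_polar_of_norm (le_of_lt hv)
  have hmem : y + z ∈ U := by
    rw [hU, Set.mem_setOf_eq]
    have hA := norm_of_mem_polar hy
    set s : ℝ := ‖z‖ with hs
    have hy0 : 0 ≤ ‖y‖ := norm_nonneg y
    have hcs : |⟪z, y⟫| ≤ s * ‖y‖ := abs_real_inner_le_norm z y
    have hzyz : ⟪z, y + z⟫ = ⟪z, y⟫ + s ^ 2 := by
      rw [inner_add_right, real_inner_self_eq_norm_sq, ← hs]
    have hn2 : ‖y + z‖ ^ 2 = ‖y‖ ^ 2 + 2 * ⟪z, y⟫ + s ^ 2 := by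
      rw [← real_inner_self_eq_norm_sq, inner_add_add_self, real_inner_self_eq_norm_sq,
        real_inner_self_eq_norm_sq, ← hs, real_inner_comm y z]
      ring
    rw [hzyz]
    -- goal : ‖y + z‖ - (⟪z, y⟫ + s ^ 2) < 1
    have hRpos : 0 < 1 + ⟪z, y⟫ + s ^ 2 := by
      nlinarith [abs_le.1 hcs]
    have hsq : ‖y + z‖ ^ 2 < (1 + ⟪z, y⟫ + s ^ 2) ^ 2 := by
      nlinarith [abs_le.1 hcs, sq_nonneg (s - 1), sq_nonneg s, sq_nonneg (‖y‖ - s)]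
    have := lt_of_pow_lt_pow_left₀ 2 (le_of_lt hRpos) hsq
    linarith
  exact interior_maximal hUsub hUopen hmem

lemma alpha_polar_top {z : E} (hz : 1 ≤ ‖z‖) :
    alpha (polarBody (Metric.closedBall (0 : E) 1) z) = ⊤ := by
  refine top_unique (le_iInf fun m => le_iInf fun hm => le_iInf fun q => le_iInf fun h => ?_)
  haveI := hm
  exfalso
  have hfr := h.2.1
  refine no_translate h z fun i => ?_
  have hqi : q i ∈ polarBody (Metric.closedBall (0 : E) 1) z :=
    (polar_closed _ _).frontier_subset (hfr i)
  exact far_step hz hqi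


/-- For the closed Euclidean unit ball `B ⊆ ℝⁿ`, `β(B) = 16`; more precisely,
`α(B)·α(B^z) ≥ 16` for every `z` in the interior of `B`, with equality at the center. -/
theorem billiardProduct_unitBall {n : ℕ} (hn : 0 < n) :
    billiardProduct (Metric.closedBall (0 : EuclideanSpace ℝ (Fin n)) 1) = 16 ∧
      (∀ z ∈ interior (Metric.closedBall (0 : EuclideanSpace ℝ (Fin n)) 1),
        16 ≤ alpha (Metric.closedBall (0 : EuclideanSpace ℝ (Fin n)) 1) *
          alpha (polarBody (Metric.closedBall (0 : EuclideanSpace ℝ (Fin n)) 1) z)) ∧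
      alpha (Metric.closedBall (0 : EuclideanSpace ℝ (Fin n)) 1) *
          alpha (polarBody (Metric.closedBall (0 : EuclideanSpace ℝ (Fin n)) 1) 0) = 16 := by
  set B := Metric.closedBall (0 : EuclideanSpace ℝ (Fin n)) 1 with hB
  have he : ‖(EuclideanSpace.single (⟨0, hn⟩ : Fin n) (1 : ℝ))‖ = 1 := by
    rw [EuclideanSpace.norm_single]; norm_num
  have hαB : alpha B = 4 := alpha_unitBall he
  have h0 : alpha B * alpha (polarBody B 0) = 16 := by
    rw [hB, polar_zero, ← hB, hαB]
    norm_num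
  have hgen : ∀ z : EuclideanSpace ℝ (Fin n),
      (16 : ℝ≥0∞) ≤ alpha B * alpha (polarBody B z) := by
    intro z
    rcases lt_or_ge ‖z‖ 1 with hz | hz
    · have h4 : (4 : ℝ≥0∞) ≤ alpha (polarBody B z) := by
        have := alpha_ge one_pos (ball_subset_polar hz)
        calc (4 : ℝ≥0∞) = ENNReal.ofReal (4 * 1) := by norm_num
          _ ≤ _ := this
      calc (16 : ℝ≥0∞) = 4 * 4 := by norm_num
        _ ≤ alpha B * alpha (polarBody B z) := by
            rw [hαB]; exact mul_le_mul' le_rfl h4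
    · rw [hB, alpha_polar_top hz, ← hB, hαB, ENNReal.mul_top (by norm_num)]
      exact le_top
  refine ⟨?_, fun z _ => hgen z, h0⟩
  refine le_antisymm ?_ (le_iInf hgen)
  calc billiardProduct B ≤ alpha B * alpha (polarBody B 0) := iInf_le _ 0
    _ = 16 := h0
end
end

section
/- Let K ⊆ ℝⁿ be a convex body with β(K) = 16. Then K has constant width, i.e. the width w_v(K) = sup_{x∈K}⟨x,v⟩ − inf_{x∈K}⟨x,v⟩ is the same for all unit vectors v. -/
open scoped ENNReal RealInnerProductSpace Pointwise

noncomputable section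

variable {E : Type*} [NormedAddCommGroup E] [InnerProductSpace ℝ E]

/-- The width of `K` in the direction of the vector `v`. -/
def widthIn (K : Set E) (v : E) : ℝ :=
  sSup ((fun x => ⟪x, v⟫) '' K) - sInf ((fun x => ⟪x, v⟫) '' K)

lemma not_interior_of_max {K : Set E} {a w : E} (hw : ‖w‖ = 1)
    (hmax : ∀ x ∈ K, ⟪x - a, w⟫ ≤ (0:ℝ)) : a ∉ interior K := by
  intro hi
  obtain ⟨δ, hδ, hball⟩ := Metric.mem_nhds_iff.mp (mem_interior_iff_mem_nhds.mp hi)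
  have hx : a + (δ/2) • w ∈ K := by
    apply hball
    simp only [Metric.mem_ball, dist_eq_norm, add_sub_cancel_left, norm_smul, hw,
      Real.norm_eq_abs, mul_one]
    rw [abs_of_pos (by linarith)]; linarith
  have := hmax _ hx
  rw [add_sub_cancel_left, real_inner_smul_left, real_inner_self_eq_norm_sq, hw] at this
  nlinarith

lemma two_bounce (K : Set E) {a b w : E} {h : ℝ} (hw : ‖w‖ = 1) (hh : 0 < h)
    (hab : a - b = h • w) (haK : a ∈ K) (hbK : b ∈ K)
    (hmax : ∀ x ∈ K, ⟪x - a, w⟫ ≤ (0:ℝ)) (hmin : ∀ x ∈ K, ⟪x - b, -w⟫ ≤ (0:ℝ)) :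
    alpha K ≤ ENNReal.ofReal (2 * h) := by
  have hw0 : w ≠ 0 := by intro h0; rw [h0, norm_zero] at hw; norm_num at hw
  have hne : a ≠ b := by
    intro he
    rw [he, sub_self] at hab
    exact hw0 (by simpa [smul_eq_zero, hh.ne'] using hab.symm)
  set q : ZMod 2 → E := fun i => if i = 0 then b else a with hq
  have hq0 : q 0 = b := by simp [hq]
  have hq1 : q 1 = a := by norm_num [hq]
  have hnab : ‖a - b‖ = h := by
    rw [hab, norm_smul, hw, Real.norm_eq_abs, abs_of_pos hh, mul_one]
  have hnba : ‖b - a‖ = h := by rw [norm_sub_rev]; exact hnab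
  have hvab : ‖a - b‖⁻¹ • (a - b) = w := by
    rw [hnab, hab, smul_smul, inv_mul_cancel₀ hh.ne', one_smul]
  have hvba : ‖b - a‖⁻¹ • (b - a) = -w := by
    rw [hnba, ← neg_sub a b, hab, smul_neg, smul_smul, inv_mul_cancel₀ hh.ne', one_smul]
  have hfr : ∀ {c : E} {v : E}, ‖v‖ = 1 → c ∈ K → (∀ x ∈ K, ⟪x - c, v⟫ ≤ (0:ℝ)) →
      c ∈ frontier K := by
    intro c v hv hc hm
    exact ⟨subset_closure hc, not_interior_of_max hv hm⟩
  have hzm : ∀ i : ZMod 2, i = 0 ∨ i = 1 := by decide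
  have htraj : IsClosedBilliardTraj K q := by
    refine ⟨le_refl 2, ?_, ?_, ?_⟩
    · intro i
      rcases hzm i with rfl | rfl
      · rw [hq0]; exact hfr (by rw [norm_neg]; exact hw) hbK hmin
      · rw [hq1]; exact hfr hw haK hmax
    · intro i
      rcases hzm i with rfl | rfl
      · show q (0+1) ≠ q 0
        have : (0 + 1 : ZMod 2) = 1 := by decide
        rw [this, hq0, hq1]; exact hne
      · show q (1+1) ≠ q 1
        have : (1 + 1 : ZMod 2) = 0 := by decide
        rw [this, hq0, hq1]; exact hne.symm
    · intro i
      rcases hzm i with rfl | rfl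
      · refine ⟨2, -w, by norm_num, by rw [norm_neg]; exact hw, ?_, ?_⟩
        · rw [hq0]; exact hmin
        · have e1 : (0 + 1 : ZMod 2) = 1 := by decide
          have e2 : (0 - 1 : ZMod 2) = 1 := by decide
          rw [e1, e2, hq0, hq1, hvab, hvba]
          module
      · refine ⟨2, w, by norm_num, hw, ?_, ?_⟩
        · rw [hq1]; exact hmax
        · have e1 : (1 + 1 : ZMod 2) = 0 := by decide
          have e2 : (1 - 1 : ZMod 2) = 0 := by decide
          rw [e1, e2, hq0, hq1, hvab, hvba]
          module
  have hlen : billiardLength q = 2 * h := by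
    have huniv : (Finset.univ : Finset (ZMod 2)) = {0, 1} := by decide
    rw [billiardLength, huniv, Finset.sum_insert (by decide), Finset.sum_singleton]
    have e1 : (0 + 1 : ZMod 2) = 1 := by decide
    have e2 : (1 + 1 : ZMod 2) = 0 := by decide
    rw [e1, e2, hq0, hq1, hnab, hnba]; ring
  calc alpha K ≤ ⨅ (_ : NeZero 2) (q' : ZMod 2 → E) (_ : IsClosedBilliardTraj K q'),
        ENNReal.ofReal (billiardLength q') := iInf_le _ 2
    _ ≤ ⨅ (q' : ZMod 2 → E) (_ : IsClosedBilliardTraj K q'),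
        ENNReal.ofReal (billiardLength q') := iInf_le _ ⟨by norm_num⟩
    _ ≤ ⨅ (_ : IsClosedBilliardTraj K q), ENNReal.ofReal (billiardLength q) := iInf_le _ q
    _ ≤ ENNReal.ofReal (billiardLength q) := iInf_le _ htraj
    _ = ENNReal.ofReal (2 * h) := by rw [hlen]

lemma width_spec {K : Set E} (hK : IsCompact K) (hne : K.Nonempty) (w : E) :
    ∃ x₁ ∈ K, ∃ x₂ ∈ K, widthIn K w = ⟪x₁ - x₂, w⟫ ∧
      (∀ x ∈ K, ⟪x, w⟫ ≤ ⟪x₁, w⟫) ∧ (∀ x ∈ K, ⟪x₂, w⟫ ≤ ⟪x, w⟫) := by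
  have hc : Continuous fun x : E => ⟪x, w⟫ := continuous_id.inner continuous_const
  obtain ⟨x₁, hx₁K, hx₁⟩ := hK.exists_isMaxOn hne hc.continuousOn
  obtain ⟨x₂, hx₂K, hx₂⟩ := hK.exists_isMinOn hne hc.continuousOn
  refine ⟨x₁, hx₁K, x₂, hx₂K, ?_, fun x hx => hx₁ hx, fun x hx => hx₂ hx⟩
  have h1 : sSup ((fun x => ⟪x, w⟫) '' K) = ⟪x₁, w⟫ :=
    IsGreatest.csSup_eq ⟨⟨x₁, hx₁K, rfl⟩, by rintro _ ⟨x, hx, rfl⟩; exact hx₁ hx⟩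
  have h2 : sInf ((fun x => ⟪x, w⟫) '' K) = ⟪x₂, w⟫ :=
    IsLeast.csInf_eq ⟨⟨x₂, hx₂K, rfl⟩, by rintro _ ⟨x, hx, rfl⟩; exact hx₂ hx⟩
  rw [widthIn, h1, h2, inner_sub_left]

lemma width_cont {K : Set E} (hK : IsCompact K) (hne : K.Nonempty) :
    Continuous (widthIn K) := by
  obtain ⟨R, hR⟩ := hK.isBounded.subset_closedBall 0
  have hRnn : 0 ≤ R := by
    obtain ⟨x0, hx0⟩ := hne
    have := hR hx0
    rw [Metric.mem_closedBall] at this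
    exact le_trans dist_nonneg this
  have key : ∀ w w' : E, widthIn K w - widthIn K w' ≤ 2 * R * ‖w - w'‖ := by
    intro w w'
    obtain ⟨x₁, hx₁, x₂, hx₂, heq, hmax, hmin⟩ := width_spec hK hne w
    obtain ⟨y₁, hy₁, y₂, hy₂, heq', hmax', hmin'⟩ := width_spec hK hne w'
    have h1 : ⟪x₁ - x₂, w'⟫ ≤ widthIn K w' := by
      rw [heq', inner_sub_left, inner_sub_left]
      linarith [hmax' _ hx₁, hmin' _ hx₂]
    have hb1 : ‖x₁‖ ≤ R := by simpa [Metric.mem_closedBall, dist_eq_norm] using hR hx₁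
    have hb2 : ‖x₂‖ ≤ R := by simpa [Metric.mem_closedBall, dist_eq_norm] using hR hx₂
    have h2 : ⟪x₁ - x₂, w - w'⟫ ≤ 2 * R * ‖w - w'‖ := by
      calc ⟪x₁ - x₂, w - w'⟫ ≤ ‖x₁ - x₂‖ * ‖w - w'‖ := real_inner_le_norm _ _
        _ ≤ 2 * R * ‖w - w'‖ := by
            have : ‖x₁ - x₂‖ ≤ 2 * R := le_trans (norm_sub_le _ _) (by linarith)
            exact mul_le_mul_of_nonneg_right this (norm_nonneg _)
    have h3 : widthIn K w = ⟪x₁ - x₂, w'⟫ + ⟪x₁ - x₂, w - w'⟫ := by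
      rw [heq, ← inner_add_right]
      congr 1
      abel
    linarith
  have hlip : LipschitzWith (Real.toNNReal (2 * R)) (widthIn K) := by
    apply LipschitzWith.of_dist_le_mul
    intro w w'
    rw [Real.dist_eq, dist_eq_norm, Real.coe_toNNReal _ (by positivity), abs_sub_le_iff]
    exact ⟨key w w', by rw [norm_sub_rev]; exact key w' w⟩
  exact hlip.continuous

lemma double_normal {E : Type*} [NormedAddCommGroup E] [InnerProductSpace ℝ E]
    [CompleteSpace E] {K : Set E} (hK : IsCompact K) (hconv : Convex ℝ K)
    {c : E} (hcK : c ∈ K) {u₀ : E} (hu₀ : ‖u₀‖ = 1)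
    (hmin : ∀ w : E, ‖w‖ = 1 → widthIn K u₀ ≤ widthIn K w)
    (hpos : 0 < widthIn K u₀) : widthIn K u₀ • u₀ ∈ K - K := by
  have hne : K.Nonempty := ⟨c, hcK⟩
  set h₀ := widthIn K u₀ with hh₀def
  by_contra hnot
  have hCconv : Convex ℝ (K - K) := hconv.sub hconv
  have hCcomp : IsCompact (K - K) := by
    have himg : K - K = (fun pr : E × E => pr.1 - pr.2) '' (K ×ˢ K) := by
      ext x
      simp only [Set.mem_sub, Set.mem_image, Set.mem_prod, Prod.exists]
      constructor
      · rintro ⟨a, ha, b, hb, rfl⟩; exact ⟨a, b, ⟨ha, hb⟩, rfl⟩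
      · rintro ⟨a, b, ⟨ha, hb⟩, rfl⟩; exact ⟨a, ha, b, hb, rfl⟩
    rw [himg]
    exact (hK.prod hK).image (continuous_fst.sub continuous_snd)
  obtain ⟨f, t, hft, htf⟩ := geometric_hahn_banach_closed_point hCconv hCcomp.isClosed hnot
  have h0C : (0 : E) ∈ K - K := ⟨c, hcK, c, hcK, sub_self c⟩
  have ht0 : 0 < t := by have := hft _ h0C; simpa using this
  set ν₀ := (InnerProductSpace.toDual ℝ E).symm f with hν₀def
  have hν₀app : ∀ y, ⟪ν₀, y⟫ = f y := fun y => InnerProductSpace.toDual_symm_apply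
  have hν₀ne : ν₀ ≠ 0 := by
    intro h0
    have h1 := hν₀app (h₀ • u₀)
    rw [h0, inner_zero_left] at h1
    linarith [htf]
  have hν₀pos : (0:ℝ) < ‖ν₀‖⁻¹ := by
    rw [inv_pos, norm_pos_iff]; exact hν₀ne
  set ν := ‖ν₀‖⁻¹ • ν₀ with hνdef
  have hνnorm : ‖ν‖ = 1 := norm_smul_inv_norm hν₀ne
  have hgemin : h₀ ≤ widthIn K ν := hmin ν hνnorm
  obtain ⟨b₁, hb₁, b₂, hb₂, heqν, _, _⟩ := width_spec hK hne ν
  have hbC : b₁ - b₂ ∈ K - K := ⟨b₁, hb₁, b₂, hb₂, rfl⟩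
  have e1 : widthIn K ν = ‖ν₀‖⁻¹ * f (b₁ - b₂) := by
    rw [heqν, real_inner_comm, hνdef, real_inner_smul_left, hν₀app]
  have e2 : ‖ν₀‖⁻¹ * f (h₀ • u₀) = h₀ * ⟪ν, u₀⟫ := by
    rw [← hν₀app, hνdef, real_inner_smul_left, real_inner_smul_right]
    ring
  have e3 : ⟪ν, u₀⟫ ≤ 1 := by
    have := real_inner_le_norm ν u₀
    rw [hνnorm, hu₀, one_mul] at this
    exact this
  have hltt : f (b₁ - b₂) < t := hft _ hbC
  have hlt : widthIn K ν < h₀ := by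
    calc widthIn K ν = ‖ν₀‖⁻¹ * f (b₁ - b₂) := e1
      _ < ‖ν₀‖⁻¹ * t := mul_lt_mul_of_pos_left hltt hν₀pos
      _ < ‖ν₀‖⁻¹ * f (h₀ • u₀) := mul_lt_mul_of_pos_left htf hν₀pos
      _ = h₀ * ⟪ν, u₀⟫ := e2
      _ ≤ h₀ * 1 := mul_le_mul_of_nonneg_left e3 hpos.le
      _ = h₀ := mul_one _
  linarith

set_option maxHeartbeats 1000000 in
/-- A convex body `K ⊆ ℝⁿ` with `β(K) = 16` has constant width. -/
theorem constant_width_of_billiardProduct_eq_sixteen {n : ℕ}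
    (K : Set (EuclideanSpace ℝ (Fin n)))
    (hKconv : Convex ℝ K) (hKcomp : IsCompact K) (hKint : (interior K).Nonempty)
    (hβ : billiardProduct K = 16) :
    ∀ u v : EuclideanSpace ℝ (Fin n), ‖u‖ = 1 → ‖v‖ = 1 → widthIn K u = widthIn K v := by
  intro u v hu hv
  obtain ⟨c, hcInt⟩ := hKint
  have hcK : c ∈ K := interior_subset hcInt
  have hne : K.Nonempty := ⟨c, hcK⟩
  obtain ⟨ε, hε, hball⟩ := Metric.mem_nhds_iff.mp (mem_interior_iff_mem_nhds.mp hcInt)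
  have hballK : ∀ w : EuclideanSpace ℝ (Fin n), ‖w‖ = 1 → c + (ε/2) • w ∈ K := by
    intro w hw
    apply hball
    simp only [Metric.mem_ball, dist_eq_norm, add_sub_cancel_left, norm_smul, hw,
      Real.norm_eq_abs, mul_one]
    rw [abs_of_pos (by linarith)]; linarith
  -- diameter pair
  obtain ⟨⟨p, q⟩, hpqK, hpqmax⟩ := (hKcomp.prod hKcomp).exists_isMaxOn (hne.prod hne)
    ((continuous_fst.dist continuous_snd).continuousOn)
  have hp : p ∈ K := hpqK.1
  have hq : q ∈ K := hpqK.2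
  set D := ‖p - q‖ with hDdef
  have hD : ∀ x ∈ K, ∀ y ∈ K, ‖x - y‖ ≤ D := by
    intro x hx y hy
    have := hpqmax (Set.mk_mem_prod hx hy)
    simpa [dist_eq_norm] using this
  have hDpos : 0 < D := by
    have h1 := hD _ (hballK u hu) _ hcK
    rw [add_sub_cancel_left, norm_smul, hu, Real.norm_eq_abs, mul_one,
      abs_of_pos (by linarith : (0:ℝ) < ε/2)] at h1
    linarith
  -- minimal width direction
  obtain ⟨u₀, hu₀mem, hu₀min⟩ :=
    (isCompact_sphere (0 : EuclideanSpace ℝ (Fin n)) 1).exists_isMinOn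
      ⟨u, by rwa [mem_sphere_zero_iff_norm]⟩ (width_cont hKcomp hne).continuousOn
  have hu₀ : ‖u₀‖ = 1 := mem_sphere_zero_iff_norm.mp hu₀mem
  set h₀ := widthIn K u₀ with hh₀def
  obtain ⟨a₁, ha₁, a₂, ha₂, hweq, hwmax, hwmin⟩ := width_spec hKcomp hne u₀
  have hcu₀ : ⟪c + (ε/2) • u₀, u₀⟫ = ⟪c, u₀⟫ + ε/2 := by
    rw [inner_add_left, real_inner_smul_left, real_inner_self_eq_norm_sq, hu₀]; ring
  have hcu₀' : ⟪c + (ε/2) • (-u₀), u₀⟫ = ⟪c, u₀⟫ - ε/2 := by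
    rw [inner_add_left, real_inner_smul_left, inner_neg_left, real_inner_self_eq_norm_sq, hu₀]
    ring
  have h₀pos : 0 < h₀ := by
    have h1 := hwmax _ (hballK u₀ hu₀)
    have h2 := hwmin _ (hballK (-u₀) (by rw [norm_neg]; exact hu₀))
    rw [hcu₀] at h1
    rw [hcu₀'] at h2
    rw [hh₀def, hweq, inner_sub_left]
    linarith
  -- double normal in direction u₀
  have hmemC : h₀ • u₀ ∈ K - K := by
    rw [hh₀def]
    exact double_normal hKcomp hKconv hcK hu₀
      (fun w hw => hu₀min (mem_sphere_zero_iff_norm.mpr hw)) (hh₀def ▸ h₀pos)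
  obtain ⟨p₀, hp₀K, q₀, hq₀K, hpq₀'⟩ := hmemC
  have hpq₀ : p₀ - q₀ = h₀ • u₀ := hpq₀'
  have hip : ⟪p₀ - q₀, u₀⟫ = h₀ := by
    rw [hpq₀, real_inner_smul_left, real_inner_self_eq_norm_sq, hu₀]; ring
  have hweq' : h₀ = ⟪a₁, u₀⟫ - ⟪a₂, u₀⟫ := by rw [hh₀def, hweq, inner_sub_left]
  have hpmax : ∀ x ∈ K, ⟪x - p₀, u₀⟫ ≤ (0:ℝ) := by
    intro x hx
    rw [inner_sub_left] at hip ⊢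
    linarith [hwmax _ hx, hwmax _ hp₀K, hwmin _ hq₀K]
  have hqmin : ∀ x ∈ K, ⟪x - q₀, -u₀⟫ ≤ (0:ℝ) := by
    intro x hx
    rw [inner_neg_right, inner_sub_left]
    rw [inner_sub_left] at hip
    linarith [hwmin _ hx, hwmax _ hp₀K, hwmin _ hq₀K]
  have halphaK := two_bounce K hu₀ h₀pos hpq₀ hp₀K hq₀K hpmax hqmin
  -- polar side
  set z := (2⁻¹ : ℝ) • (p + q) with hzdef
  have hpz : p - z = (2⁻¹ : ℝ) • (p - q) := by rw [hzdef]; module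
  have hqz : q - z = (2⁻¹ : ℝ) • (q - p) := by rw [hzdef]; module
  have hDsq : ⟪p - q, p - q⟫ = D^2 := by rw [real_inner_self_eq_norm_sq, hDdef]
  have hDsq' : ⟪q - p, q - p⟫ = D^2 := by
    rw [real_inner_self_eq_norm_sq, norm_sub_rev, hDdef]
  have hD2 : (0:ℝ) < D^2 := by positivity
  have hkey1 : ∀ x ∈ K, ⟪x - p, p - q⟫ ≤ (0:ℝ) := by
    intro x hx
    have h1 : ⟪x - q, p - q⟫ ≤ ‖x - q‖ * ‖p - q‖ := real_inner_le_norm _ _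
    have h2 : ‖x - q‖ ≤ D := hD x hx q hq
    have h3 : ⟪x - p, p - q⟫ = ⟪x - q, p - q⟫ - ⟪p - q, p - q⟫ := by
      rw [← inner_sub_left]; congr 1; abel
    rw [h3, hDsq]
    nlinarith [norm_nonneg (x - q), hDdef]
  have hkey2 : ∀ x ∈ K, ⟪x - q, q - p⟫ ≤ (0:ℝ) := by
    intro x hx
    have h1 : ⟪x - p, q - p⟫ ≤ ‖x - p‖ * ‖q - p‖ := real_inner_le_norm _ _
    have h2 : ‖x - p‖ ≤ D := hD x hx p hp
    have h3 : ⟪x - q, q - p⟫ = ⟪x - p, q - p⟫ - ⟪q - p, q - p⟫ := by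
      rw [← inner_sub_left]; congr 1; abel
    have h4 : ‖q - p‖ = D := by rw [norm_sub_rev]
    rw [h3, hDsq']
    nlinarith [norm_nonneg (x - p), h4]
  set P := polarBody K z with hPdef
  set yp := (2 / D^2) • (p - q) with hypdef
  set ym := (2 / D^2) • (q - p) with hymdef
  have hypP : yp ∈ P := by
    intro x hx
    have hxz : x - z = (x - p) + (2⁻¹ : ℝ) • (p - q) := by rw [hzdef]; module
    rw [hypdef, real_inner_smul_right, hxz, inner_add_left, real_inner_smul_left, hDsq]
    have := hkey1 x hx
    rw [div_mul_eq_mul_div, div_le_one hD2]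
    nlinarith
  have hymP : ym ∈ P := by
    intro x hx
    have hxz : x - z = (x - q) + (2⁻¹ : ℝ) • (q - p) := by rw [hzdef]; module
    rw [hymdef, real_inner_smul_right, hxz, inner_add_left, real_inner_smul_left, hDsq']
    have := hkey2 x hx
    rw [div_mul_eq_mul_div, div_le_one hD2]
    nlinarith
  have hPub : ∀ y ∈ P, ⟪y, p - q⟫ ≤ (2:ℝ) := by
    intro y hy
    have h1 : ⟪p - z, y⟫ ≤ 1 := hy p hp
    rw [hpz, real_inner_smul_left] at h1
    rw [real_inner_comm]
    linarith
  have hPub' : ∀ y ∈ P, ⟪y, q - p⟫ ≤ (2:ℝ) := by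
    intro y hy
    have h1 : ⟪q - z, y⟫ ≤ 1 := hy q hq
    rw [hqz, real_inner_smul_left] at h1
    rw [real_inner_comm]
    linarith
  have hypval : ⟪yp, p - q⟫ = 2 := by
    rw [hypdef, real_inner_smul_left, hDsq]
    field_simp
  have hymval : ⟪ym, q - p⟫ = 2 := by
    rw [hymdef, real_inner_smul_left, hDsq']
    field_simp
  have hPmax : ∀ y ∈ P, ⟪y - yp, D⁻¹ • (p - q)⟫ ≤ (0:ℝ) := by
    intro y hy
    rw [real_inner_smul_right, inner_sub_left, hypval]
    have h1 := hPub y hy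
    have h2 : (0:ℝ) ≤ D⁻¹ := (inv_pos.mpr hDpos).le
    nlinarith
  have hPmin : ∀ y ∈ P, ⟪y - ym, -(D⁻¹ • (p - q))⟫ ≤ (0:ℝ) := by
    intro y hy
    have hneg : -(D⁻¹ • (p - q)) = D⁻¹ • (q - p) := by module
    rw [hneg, real_inner_smul_right, inner_sub_left, hymval]
    have h1 := hPub' y hy
    have h2 : (0:ℝ) ≤ D⁻¹ := (inv_pos.mpr hDpos).le
    nlinarith
  have he : ‖D⁻¹ • (p - q)‖ = 1 := by
    rw [norm_smul, Real.norm_eq_abs, abs_of_pos (inv_pos.mpr hDpos), ← hDdef]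
    field_simp
  have hab' : yp - ym = (4/D) • (D⁻¹ • (p - q)) := by
    rw [smul_smul]
    have h44 : 4/D * D⁻¹ = 4/D^2 := by field_simp
    rw [h44, hypdef, hymdef]
    module
  have halphaP := two_bounce P he (by positivity : (0:ℝ) < 4/D) hab' hypP hymP hPmax hPmin
  -- combine
  have hprod : billiardProduct K ≤ alpha K * alpha P := iInf_le _ z
  have hle : (16 : ℝ≥0∞) ≤ ENNReal.ofReal (2*h₀) * ENNReal.ofReal (2*(4/D)) := by
    rw [← hβ]
    exact hprod.trans (mul_le_mul' halphaK halphaP)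
  rw [← ENNReal.ofReal_mul (by positivity)] at hle
  rw [show (16 : ℝ≥0∞) = ENNReal.ofReal 16 from (ENNReal.ofReal_ofNat 16).symm] at hle
  have hre : (16:ℝ) ≤ 2*h₀*(2*(4/D)) := (ENNReal.ofReal_le_ofReal_iff (by positivity)).mp hle
  have hDh₀ : D ≤ h₀ := by
    have h' : 2*h₀*(2*(4/D)) = 16*h₀/D := by field_simp; ring
    rw [h', le_div_iff₀ hDpos] at hre
    linarith
  have wkey : ∀ w : EuclideanSpace ℝ (Fin n), ‖w‖ = 1 → widthIn K w = D := by
    intro w hw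
    obtain ⟨x₁, hx₁, x₂, hx₂, heq, _, _⟩ := width_spec hKcomp hne w
    have hle1 : widthIn K w ≤ D := by
      rw [heq]
      calc ⟪x₁ - x₂, w⟫ ≤ ‖x₁ - x₂‖ * ‖w‖ := real_inner_le_norm _ _
        _ ≤ D := by rw [hw, mul_one]; exact hD _ hx₁ _ hx₂
    have hge : h₀ ≤ widthIn K w := hu₀min (mem_sphere_zero_iff_norm.mpr hw)
    linarith
  rw [wkey u hu, wkey v hv]
end
end

section
/- Let T ⊆ ℝ² be a triangle with vertices A, B, C whose angle at A is greater than or equal to π/2. Then α(T) = 2h, where h is the distance from A to the line through B and C, and this value is realized by the 2-bounce trajectory along the altitude from A to the side BC. -/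
open scoped ENNReal RealInnerProductSpace Pointwise

noncomputable section

variable {E : Type*} [NormedAddCommGroup E] [InnerProductSpace ℝ E]

/-!
The altitude `AF` from `A`, traversed back and forth, is a closed billiard trajectory of length
`2h`: the triangle lies in the slab between the line `BC` and its parallel through `A`, and the
obtuse angle at `A` puts the foot `F` on the side `BC`.

Conversely, at the bounce points of a closed billiard trajectory the outer normals, weighted by
the bounce coefficients, sum to zero. Hence the trajectory meets every side of the triangle:
otherwise all its normals would support the triangle at the opposite vertex, and a vanishing
positive combination of them would force them to be orthogonal to the plane. With bounce points
`X ∈ BC`, `Y = A + γ (C - A)` and `Z = A + β (B - A)`, the trajectory is at least as long as the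
triangle `XYZ`, and `|XY| ≥ (1 - γ) h`, `|YZ| ≥ (β + γ) h`, `|ZX| ≥ (1 - β) h`. The first and last
compare with distances to the line `BC`; the middle one holds because `⟪B - A, C - A⟫ ≤ 0` makes
`|β (B - A) - γ (C - A)| ≥ |β (B - A) + γ (C - A)|`, a rescaled distance from `A` to `BC`.
-/

theorem mem_frontier_of_inner_sub_nonpos_s8 {K : Set E} {x n : E} (hx : x ∈ K) (hn : n ≠ 0)
    (hK : ∀ y ∈ K, ⟪y - x, n⟫ ≤ 0) : x ∈ frontier K := by
  refine ⟨subset_closure hx, fun hint => ?_⟩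
  have hlim : Filter.Tendsto (fun t : ℝ => x + t • n) (nhdsWithin 0 (Set.Ioi 0)) (nhds x) := by
    have : Continuous fun t : ℝ => x + t • n := by fun_prop
    simpa using this.continuousWithinAt.tendsto (s := Set.Ioi 0) (x := 0)
  obtain ⟨t, htK, ht⟩ := ((hlim.eventually (mem_interior_iff_mem_nhds.mp hint)).and
    self_mem_nhdsWithin).exists
  have := hK _ htK
  rw [add_sub_cancel_left, real_inner_smul_left, real_inner_self_eq_norm_sq] at this
  have : 0 < t * ‖n‖ ^ 2 := mul_pos ht (by positivity)
  linarith

theorem forall_mem_convexHull_inner_sub_nonpos {s : Set E} {x n : E}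
    (h : ∀ y ∈ s, ⟪y - x, n⟫ ≤ 0) : ∀ y ∈ convexHull ℝ s, ⟪y - x, n⟫ ≤ 0 := by
  have hconv : Convex ℝ {y : E | ⟪y - x, n⟫ ≤ 0} := fun y hy z hz a b ha hb hab => by
    rw [Set.mem_ofPred_eq] at hy hz ⊢
    obtain rfl : b = 1 - a := by linarith
    rw [show a • y + (1 - a) • z - x = a • (y - x) + (1 - a) • (z - x) by module,
      inner_add_left, real_inner_smul_left, real_inner_smul_left]
    exact add_nonpos (mul_nonpos_of_nonneg_of_nonpos ha hy) (mul_nonpos_of_nonneg_of_nonpos hb hz)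
  exact fun y hy => convexHull_min h hconv hy

theorem billiardLength_two {V : Type*} [NormedAddCommGroup V] (q : ZMod 2 → V) :
    billiardLength q = 2 * ‖q 1 - q 0‖ := by
  rw [billiardLength, show ∑ i : ZMod 2, ‖q (i + 1) - q i‖ = ‖q (0 + 1) - q 0‖ + ‖q (1 + 1) - q 1‖
    from Fin.sum_univ_two _]
  rw [zero_add, show (1 + 1 : ZMod 2) = 0 from rfl, norm_sub_rev (q 0)]
  ring

theorem isClosedBilliardTraj_pair {K : Set E} {a b : E} (ha : a ∈ K) (hb : b ∈ K) (hab : a ≠ b)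
    (hKa : ∀ y ∈ K, ⟪y - a, a - b⟫ ≤ 0) (hKb : ∀ y ∈ K, ⟪y - b, b - a⟫ ≤ 0) :
    IsClosedBilliardTraj K (fun i : ZMod 2 => ![a, b] i) := by
  have hunit : ∀ {x y : E}, x ≠ y → (∀ z ∈ K, ⟪z - x, x - y⟫ ≤ 0) →
      ‖‖x - y‖⁻¹ • (x - y)‖ = 1 ∧ ∀ z ∈ K, ⟪z - x, ‖x - y‖⁻¹ • (x - y)⟫ ≤ 0 :=
    fun hxy hK => ⟨norm_smul_inv_norm (sub_ne_zero.mpr hxy), fun z hz => by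
      rw [real_inner_smul_right]; exact mul_nonpos_of_nonneg_of_nonpos (by positivity) (hK z hz)⟩
  obtain ⟨hea, hKa'⟩ := hunit hab hKa
  obtain ⟨heb, hKb'⟩ := hunit hab.symm hKb
  refine ⟨le_rfl, ?_, ?_, ?_⟩
  · intro i; fin_cases i
    · exact mem_frontier_of_inner_sub_nonpos_s8 ha (norm_ne_zero_iff.mp (by rw [hea]; simp)) hKa'
    · exact mem_frontier_of_inner_sub_nonpos_s8 hb (norm_ne_zero_iff.mp (by rw [heb]; simp)) hKb'
  · intro i; fin_cases i
    · exact hab.symm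
    · exact hab
  · intro i; fin_cases i
    · refine ⟨2, _, two_pos, hea, hKa', ?_⟩
      show ‖b - a‖⁻¹ • (b - a) - ‖a - b‖⁻¹ • (a - b) = -(2 • ‖a - b‖⁻¹ • (a - b))
      rw [norm_sub_rev b a]; module
    · refine ⟨2, _, two_pos, heb, hKb', ?_⟩
      show ‖a - b‖⁻¹ • (a - b) - ‖b - a‖⁻¹ • (b - a) = -(2 • ‖b - a‖⁻¹ • (b - a))
      rw [norm_sub_rev a b]; module

theorem alpha_eq_ofReal {K : Set E} {c : ℝ}
    (hle : ∀ (m : ℕ) [NeZero m] (q : ZMod m → E), IsClosedBilliardTraj K q → c ≤ billiardLength q)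
    {m : ℕ} [NeZero m] {q : ZMod m → E} (hq : IsClosedBilliardTraj K q)
    (hc : billiardLength q = c) : alpha K = ENNReal.ofReal c :=
  le_antisymm (iInf₂_le_of_le m ‹_› (iInf₂_le_of_le q hq (by rw [hc])))
    (le_iInf₂ fun m _ => le_iInf₂ fun q hq => ENNReal.ofReal_le_ofReal (hle m q hq))

theorem sum_zmod_eq_sum_range {M : Type*} [AddCommMonoid M] {m : ℕ} [NeZero m] (f : ZMod m → M) :
    ∑ i, f i = ∑ t ∈ Finset.range m, f t :=
  Finset.sum_nbij' ZMod.val Nat.cast (fun i _ => Finset.mem_range.mpr (ZMod.val_lt i))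
    (fun _ _ => Finset.mem_univ _) (fun i _ => ZMod.natCast_zmod_val i)
    (fun _ ht => ZMod.val_cast_of_lt (Finset.mem_range.mp ht))
    (fun i _ => by rw [ZMod.natCast_zmod_val])

theorem dist_add_dist_add_dist_le_billiardLength {V : Type*} [NormedAddCommGroup V] {m : ℕ}
    [NeZero m] (q : ZMod m → V) (j k l : ZMod m) :
    dist (q j) (q k) + dist (q k) (q l) + dist (q l) (q j) ≤ billiardLength q := by
  wlog hkl : (k - j).val ≤ (l - j).val generalizing k l
  · have := this l k (le_of_not_ge hkl)
    linarith [dist_comm (q j) (q k), dist_comm (q k) (q l), dist_comm (q l) (q j)]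
  -- unroll the cycle into a path `f` starting at `q j`, which visits `q k`, `q l` in this order
  set f : ℕ → V := fun t => q (j + t) with hf
  have hfval : ∀ i, f (i - j).val = q i := fun i => by
    change q (j + ((i - j).val : ZMod m)) = q i
    rw [ZMod.natCast_zmod_val, add_sub_cancel]
  have hL : billiardLength q = ∑ t ∈ Finset.Ico 0 m, dist (f t) (f (t + 1)) := by
    calc billiardLength q = ∑ i, dist (q (j + i)) (q (j + i + 1)) := by
          rw [billiardLength, ← Equiv.sum_comp (Equiv.addLeft j)]
          simp only [Equiv.coe_addLeft, dist_eq_norm', add_assoc]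
      _ = _ := by
          rw [sum_zmod_eq_sum_range, Finset.range_eq_Ico]
          simp only [hf, Nat.cast_succ, add_assoc]
  have hb : (l - j).val ≤ m := (ZMod.val_lt _).le
  rw [hL, ← Finset.sum_Ico_consecutive _ (Nat.zero_le _) hb,
    ← Finset.sum_Ico_consecutive _ (Nat.zero_le _) hkl]
  have h1 := dist_le_Ico_sum_dist f (Nat.zero_le (k - j).val)
  have h2 := dist_le_Ico_sum_dist f hkl
  have h3 := dist_le_Ico_sum_dist f hb
  rw [hfval, hfval] at h2
  rw [hfval] at h1 h3
  simp only [hf, Nat.cast_zero, add_zero, ZMod.natCast_self] at h1 h3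
  linarith

theorem IsClosedBilliardTraj.exists_sum_smul_normal_eq_zero {K : Set E} {m : ℕ} [NeZero m]
    {q : ZMod m → E} (hq : IsClosedBilliardTraj K q) :
    ∃ (lam : ZMod m → ℝ) (nv : ZMod m → E), (∀ i, 0 < lam i) ∧ (∀ i, nv i ≠ 0) ∧
      (∀ i, ∀ x ∈ K, ⟪x - q i, nv i⟫ ≤ 0) ∧ ∑ i, lam i • nv i = 0 := by
  obtain ⟨-, -, -, hnormal⟩ := hq
  choose lam nv hlam hnv hK hturn using hnormal
  refine ⟨lam, nv, hlam, fun i => norm_ne_zero_iff.mp (by rw [hnv i]; exact one_ne_zero), hK, ?_⟩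
  set d : ZMod m → E := fun i => ‖q (i + 1) - q i‖⁻¹ • (q (i + 1) - q i)
  have hshift : ∑ i, d (i - 1) = ∑ i, d i := (Equiv.subRight 1).sum_comp d
  have hturn' : ∀ i, d i - d (i - 1) = -(lam i • nv i) := fun i => by
    simp only [d, sub_add_cancel]; exact hturn i
  calc ∑ i, lam i • nv i = -∑ i, (d i - d (i - 1)) := by
        simp only [hturn', Finset.sum_neg_distrib, neg_neg]
    _ = 0 := by rw [Finset.sum_sub_distrib, hshift, sub_self, neg_zero]

theorem inner_sub_eq_zero_of_notMem_convexHull_erase [DecidableEq E] {s : Finset E} {x n P : E}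
    (hx : x ∈ convexHull ℝ (s : Set E)) (hn : ∀ y ∈ s, ⟪y - x, n⟫ ≤ 0)
    (hP : x ∉ convexHull ℝ (s.erase P : Set E)) : ⟪P - x, n⟫ = 0 := by
  obtain ⟨w, hw0, hw1, hwx⟩ := Finset.mem_convexHull'.mp hx
  have hsum : ∑ y ∈ s, w y * ⟪y - x, n⟫ = 0 := by
    simp_rw [inner_sub_left, mul_sub, Finset.sum_sub_distrib, ← Finset.sum_mul, hw1,
      ← real_inner_smul_left]
    rw [← sum_inner, hwx, one_smul, sub_self]
  have hterm := (Finset.sum_eq_zero_iff_of_nonpos fun y hy =>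
    mul_nonpos_of_nonneg_of_nonpos (hw0 y hy) (hn y hy)).mp hsum
  by_contra hPx
  have hPs : P ∈ s := by
    by_contra h
    rw [Finset.erase_eq_of_notMem h] at hP
    exact hP hx
  have hwP : w P = 0 := (mul_eq_zero.mp (hterm P hPs)).resolve_right hPx
  refine hP (Finset.mem_convexHull'.mpr ⟨w, fun y hy => hw0 y (Finset.mem_of_mem_erase hy), ?_, ?_⟩)
  · rwa [Finset.sum_erase _ hwP]
  · rwa [Finset.sum_erase _ (by rw [hwP, zero_smul])]

theorem IsClosedBilliardTraj.exists_mem_convexHull_erase [DecidableEq E] {s : Finset E}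
    (hs : vectorSpan ℝ (s : Set E) = ⊤) {m : ℕ} [NeZero m] {q : ZMod m → E}
    (hq : IsClosedBilliardTraj (convexHull ℝ (s : Set E)) q) (P : E) :
    ∃ i, q i ∈ convexHull ℝ (s.erase P : Set E) := by
  by_contra! hP
  obtain ⟨lam, nv, hlam, hnv, hK, hsum⟩ := hq.exists_sum_smul_normal_eq_zero
  have hqK : ∀ i, q i ∈ convexHull ℝ (s : Set E) := fun i =>
    (s.finite_toSet.isCompact_convexHull (𝕜 := ℝ)).isClosed.frontier_subset (hq.2.1 i)
  have hvert : ∀ i, ∀ y ∈ s, ⟪y - q i, nv i⟫ ≤ 0 := fun i y hy =>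
    hK i y (subset_convexHull ℝ _ hy)
  -- every normal `nv i` also supports the hull at `P`, and the normals balance out
  have hPsupp : ∀ i, ∀ y ∈ s, lam i * ⟪y - P, nv i⟫ ≤ 0 := fun i y hy => by
    have hPi := inner_sub_eq_zero_of_notMem_convexHull_erase (hqK i) (hvert i) (hP i)
    have : ⟪y - P, nv i⟫ = ⟪y - q i, nv i⟫ - ⟪P - q i, nv i⟫ := by
      rw [← inner_sub_left, sub_sub_sub_cancel_right]
    exact mul_nonpos_of_nonneg_of_nonpos (hlam i).le (by linarith [hvert i y hy])
  have horth : ∀ y ∈ s, ⟪y - P, nv 0⟫ = 0 := fun y hy => by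
    have hsum' : ∑ i, lam i * ⟪y - P, nv i⟫ = 0 := by
      simp_rw [← real_inner_smul_right, ← inner_sum, hsum, inner_zero_right]
    have := (Finset.sum_eq_zero_iff_of_nonpos fun i _ => hPsupp i y hy).mp hsum' 0
      (Finset.mem_univ _)
    exact (mul_eq_zero.mp this).resolve_left (hlam 0).ne'
  have hspan : vectorSpan ℝ (s : Set E) ≤ (ℝ ∙ nv 0)ᗮ := by
    rw [vectorSpan_def, Submodule.span_le]
    rintro _ ⟨y, hy, z, hz, rfl⟩
    rw [SetLike.mem_coe, Submodule.mem_orthogonal_singleton_iff_inner_right]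
    change ⟪nv 0, y - z⟫ = 0
    rw [real_inner_comm, ← sub_sub_sub_cancel_right y z P, inner_sub_left, horth y hy, horth z hz,
      sub_self]
  have : nv 0 ∈ (ℝ ∙ nv 0)ᗮ := hspan (hs ▸ Submodule.mem_top)
  rw [Submodule.mem_orthogonal_singleton_iff_inner_right, inner_self_eq_zero] at this
  exact hnv 0 this

theorem AffineIndependent.vectorSpan_eq_top_of_finrank_eq_two [FiniteDimensional ℝ E]
    (hE : Module.finrank ℝ E = 2) {A B C : E} (h : AffineIndependent ℝ ![A, B, C]) :
    vectorSpan ℝ ({A, B, C} : Set E) = ⊤ := by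
  have hrange : Set.range ![A, B, C] = {A, B, C} := by
    rw [Matrix.range_cons, Matrix.range_cons, Matrix.range_cons_empty, Set.singleton_union,
      Set.singleton_union]
  rw [← hrange, ← direction_affineSpan,
    h.affineSpan_eq_top_iff_card_eq_finrank_add_one.mpr (by simp [hE]),
    AffineSubspace.direction_top]

theorem add_mul_infDist_affineSpan_pair_le {V : Type*} [NormedAddCommGroup V] [NormedSpace ℝ V]
    (A B C : V) (β γ : ℝ) :
    (β + γ) * Metric.infDist A (affineSpan ℝ {B, C} : Set V) ≤ ‖β • (B - A) + γ • (C - A)‖ := by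
  rcases le_or_gt (β + γ) 0 with hs | hs
  · exact (mul_nonpos_of_nonpos_of_nonneg hs Metric.infDist_nonneg).trans (norm_nonneg _)
  -- rescaled, `β • (B - A) + γ • (C - A)` points from `A` to a point of the line `BC`
  set P := AffineMap.lineMap B C (γ / (β + γ)) with hP
  have hPmem : P ∈ affineSpan ℝ {B, C} := AffineMap.lineMap_mem_affineSpan_pair _ _ _
  have hvec : (β + γ) • (A - P) = -(β • (B - A) + γ • (C - A)) := by
    rw [hP, AffineMap.lineMap_apply_module]
    match_scalars <;> field_simp <;> ring
  calc (β + γ) * Metric.infDist A (affineSpan ℝ {B, C} : Set V)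
      ≤ (β + γ) * dist A P := by gcongr; exact Metric.infDist_le_dist_of_mem hPmem
    _ = ‖β • (B - A) + γ • (C - A)‖ := by
      rw [dist_eq_norm, ← Real.norm_of_nonneg hs.le, ← norm_smul, hvec, norm_neg]

theorem norm_add_le_norm_sub_of_inner_nonpos {x y : E} (h : ⟪x, y⟫ ≤ 0) : ‖x + y‖ ≤ ‖x - y‖ := by
  rw [← sq_le_sq₀ (norm_nonneg _) (norm_nonneg _), norm_add_sq_real, norm_sub_sq_real]
  linarith

theorem add_mul_infDist_affineSpan_pair_le_norm_sub {A B C : E} (hA : ⟪B - A, C - A⟫ ≤ 0)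
    {β γ : ℝ} (hβ : 0 ≤ β) (hγ : 0 ≤ γ) :
    (β + γ) * Metric.infDist A (affineSpan ℝ {B, C} : Set E) ≤ ‖β • (B - A) - γ • (C - A)‖ :=
  (add_mul_infDist_affineSpan_pair_le A B C β γ).trans <| norm_add_le_norm_sub_of_inner_nonpos <| by
    rw [real_inner_smul_left, real_inner_smul_right]
    exact mul_nonpos_of_nonneg_of_nonpos hβ (mul_nonpos_of_nonneg_of_nonpos hγ hA)

theorem two_mul_infDist_le_of_mem_segment {A B C X Y Z : E} (hA : ⟪B - A, C - A⟫ ≤ 0)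
    (hX : X ∈ segment ℝ B C) (hY : Y ∈ segment ℝ A C) (hZ : Z ∈ segment ℝ A B) :
    2 * Metric.infDist A (affineSpan ℝ {B, C} : Set E) ≤ dist X Y + dist Y Z + dist Z X := by
  obtain ⟨a, s, -, -, has, rfl⟩ := hX
  obtain ⟨a', γ, -, hγ, haγ, rfl⟩ := hY
  obtain ⟨b', β, -, hβ, hbβ, rfl⟩ := hZ
  obtain rfl : a = 1 - s := by linarith
  obtain rfl : a' = 1 - γ := by linarith
  obtain rfl : b' = 1 - β := by linarith
  have hXY := add_mul_infDist_affineSpan_pair_le A B C (1 - s) (s - γ)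
  have hYZ := add_mul_infDist_affineSpan_pair_le_norm_sub hA hβ hγ
  have hZX := add_mul_infDist_affineSpan_pair_le A B C (1 - s - β) s
  have eXY : dist ((1 - s) • B + s • C) ((1 - γ) • A + γ • C)
      = ‖(1 - s) • (B - A) + (s - γ) • (C - A)‖ := by
    rw [dist_eq_norm]; congr 1; module
  have eYZ : dist ((1 - γ) • A + γ • C) ((1 - β) • A + β • B) = ‖β • (B - A) - γ • (C - A)‖ := by
    rw [dist_eq_norm']; congr 1; module
  have eZX : dist ((1 - β) • A + β • B) ((1 - s) • B + s • C)
      = ‖(1 - s - β) • (B - A) + s • (C - A)‖ := by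
    rw [dist_eq_norm']; congr 1; module
  rw [eXY, eYZ, eZX]
  linarith

theorem IsClosedBilliardTraj.two_mul_infDist_le_billiardLength {A B C : E}
    (hABC : AffineIndependent ℝ ![A, B, C]) (hspan : vectorSpan ℝ ({A, B, C} : Set E) = ⊤)
    (hA : ⟪B - A, C - A⟫ ≤ 0) {m : ℕ} [NeZero m] {q : ZMod m → E}
    (hq : IsClosedBilliardTraj (convexHull ℝ {A, B, C}) q) :
    2 * Metric.infDist A (affineSpan ℝ {B, C} : Set E) ≤ billiardLength q := by
  classical
  have hAB : A ≠ B := hABC.injective.ne (show (0 : Fin 3) ≠ 1 by decide)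
  have hAC : A ≠ C := hABC.injective.ne (show (0 : Fin 3) ≠ 2 by decide)
  have hBC : B ≠ C := hABC.injective.ne (show (1 : Fin 3) ≠ 2 by decide)
  have hs : (({A, B, C} : Finset E) : Set E) = {A, B, C} := by simp
  rw [← hs] at hq hspan
  obtain ⟨i, hi⟩ := hq.exists_mem_convexHull_erase hspan A
  obtain ⟨j, hj⟩ := hq.exists_mem_convexHull_erase hspan B
  obtain ⟨k, hk⟩ := hq.exists_mem_convexHull_erase hspan C
  simp only [Finset.erase_insert_eq_erase, Finset.mem_insert, hAB, Finset.mem_singleton, hAC,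
    or_self, not_false_eq_true, Finset.erase_eq_of_notMem, Finset.coe_insert,
    Finset.coe_singleton, convexHull_pair, ne_eq, Finset.erase_insert_of_ne, hBC,
    Finset.erase_singleton, insert_empty_eq] at hi hj hk
  calc 2 * Metric.infDist A (affineSpan ℝ {B, C} : Set E)
      ≤ dist (q i) (q j) + dist (q j) (q k) + dist (q k) (q i) :=
        two_mul_infDist_le_of_mem_segment hA hi hj hk
    _ ≤ billiardLength q := dist_add_dist_add_dist_le_billiardLength q i j k

theorem inner_sub_nonpos_of_pi_div_two_le_angle {A B C : E}
    (h : Real.pi / 2 ≤ EuclideanGeometry.angle B A C) : ⟪B - A, C - A⟫ ≤ 0 := by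
  rw [← InnerProductGeometry.cos_angle_mul_norm_mul_norm]
  exact mul_nonpos_of_nonpos_of_nonneg (Real.cos_nonpos_of_pi_div_two_le_of_le h
    ((EuclideanGeometry.angle_le_pi B A C).trans (by linarith [Real.pi_pos]))) (by positivity)

theorem mem_segment_of_inner_sub_sub_nonpos {B C F : E} (hF : F ∈ affineSpan ℝ {B, C})
    (h : ⟪B - F, C - F⟫ ≤ 0) : F ∈ segment ℝ B C := by
  obtain ⟨t, rfl⟩ := mem_affineSpan_pair_iff_exists_lineMap_eq.mp hF
  rcases eq_or_ne B C with rfl | hBC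
  · simp
  have hinner : ⟪B - AffineMap.lineMap B C t, C - AffineMap.lineMap B C t⟫
      = -(t * (1 - t) * ‖C - B‖ ^ 2) := by
    rw [AffineMap.lineMap_apply_module, ← real_inner_self_eq_norm_sq,
      show B - ((1 - t) • B + t • C) = -t • (C - B) by module,
      show C - ((1 - t) • B + t • C) = (1 - t) • (C - B) by module,
      real_inner_smul_left, real_inner_smul_right]
    ring
  have hpos : 0 < ‖C - B‖ ^ 2 := pow_pos (norm_pos_iff.mpr (sub_ne_zero.mpr hBC.symm)) 2
  have ht : 0 ≤ t * (1 - t) := nonneg_of_mul_nonneg_left (by linarith) hpos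
  rw [segment_eq_image_lineMap]
  exact ⟨t, ⟨by nlinarith, by nlinarith⟩, rfl⟩

def altitudeFoot (A B C : E) : E :=
  EuclideanGeometry.orthogonalProjection (affineSpan ℝ {B, C}) A

theorem altitudeFoot_mem_affineSpan (A B C : E) : altitudeFoot A B C ∈ affineSpan ℝ {B, C} :=
  EuclideanGeometry.orthogonalProjection_mem A

theorem dist_altitudeFoot (A B C : E) :
    dist A (altitudeFoot A B C) = Metric.infDist A (affineSpan ℝ {B, C} : Set E) :=
  EuclideanGeometry.dist_orthogonalProjection_eq_infDist _ A

theorem inner_sub_altitudeFoot_eq_zero {A B C y : E} (hy : y ∈ affineSpan ℝ {B, C}) :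
    ⟪y - altitudeFoot A B C, A - altitudeFoot A B C⟫ = 0 :=
  Submodule.inner_right_of_mem_orthogonal
    (AffineSubspace.vsub_mem_direction hy (altitudeFoot_mem_affineSpan A B C))
    (EuclideanGeometry.vsub_orthogonalProjection_mem_direction_orthogonal _ A)

theorem altitudeFoot_mem_segment {A B C : E} (hA : ⟪B - A, C - A⟫ ≤ 0) :
    altitudeFoot A B C ∈ segment ℝ B C := by
  set F := altitudeFoot A B C
  have hB := inner_sub_altitudeFoot_eq_zero (A := A) (left_mem_affineSpan_pair ℝ B C)
  have hC := inner_sub_altitudeFoot_eq_zero (A := A) (right_mem_affineSpan_pair ℝ B C)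
  refine mem_segment_of_inner_sub_sub_nonpos (altitudeFoot_mem_affineSpan A B C) ?_
  have : ⟪B - A, C - A⟫ = ⟪B - F, C - F⟫ + ‖A - F‖ ^ 2 := by
    rw [show B - A = (B - F) - (A - F) by abel, show C - A = (C - F) - (A - F) by abel,
      inner_sub_left, inner_sub_right (B - F), inner_sub_right (A - F), hB,
      real_inner_comm (C - F) (A - F), hC, real_inner_self_eq_norm_sq]
    ring
  linarith [sq_nonneg ‖A - F‖]

theorem isClosedBilliardTraj_altitude {A B C : E} (hA : ⟪B - A, C - A⟫ ≤ 0)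
    (hAline : A ∉ affineSpan ℝ {B, C}) :
    IsClosedBilliardTraj (convexHull ℝ {A, B, C})
      (fun i : ZMod 2 => ![A, altitudeFoot A B C] i) := by
  set F := altitudeFoot A B C
  have hB := inner_sub_altitudeFoot_eq_zero (A := A) (left_mem_affineSpan_pair ℝ B C)
  have hC := inner_sub_altitudeFoot_eq_zero (A := A) (right_mem_affineSpan_pair ℝ B C)
  have hAF : A ≠ F := fun h => hAline (h ▸ altitudeFoot_mem_affineSpan A B C)
  refine isClosedBilliardTraj_pair (subset_convexHull ℝ _ (by simp))
    (segment_subset_convexHull (by simp) (by simp) (altitudeFoot_mem_segment hA)) hAF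
    (forall_mem_convexHull_inner_sub_nonpos ?_) (forall_mem_convexHull_inner_sub_nonpos ?_)
  · simp only [Set.mem_insert_iff, Set.mem_singleton_iff, forall_eq_or_imp, forall_eq]
    refine ⟨by simp, ?_, ?_⟩ <;>
    · rw [← sub_sub_sub_cancel_right _ A F, inner_sub_left, real_inner_self_eq_norm_sq]
      linarith [sq_nonneg ‖A - F‖]
  · simp only [Set.mem_insert_iff, Set.mem_singleton_iff, forall_eq_or_imp, forall_eq]
    refine ⟨?_, ?_, ?_⟩
    · rw [← neg_sub F A, inner_neg_left, real_inner_self_eq_norm_sq]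
      linarith [sq_nonneg ‖F - A‖]
    · rw [← neg_sub A F, inner_neg_right, hB, neg_zero]
    · rw [← neg_sub A F, inner_neg_right, hC, neg_zero]

/-- For a triangle `T` with vertices `A, B, C` whose angle at `A` is at
least `π/2`, `α(T) = 2 h`, where `h` is the distance from `A` to the line through `B` and
`C`, and this value is realized by the 2-bounce trajectory along the altitude from `A`. -/
theorem alpha_obtuse_triangle (A B C : EuclideanSpace ℝ (Fin 2))
    (hABC : AffineIndependent ℝ ![A, B, C])
    (hA : Real.pi / 2 ≤ EuclideanGeometry.angle B A C) :
    alpha (convexHull ℝ {A, B, C}) =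
      ENNReal.ofReal
        (2 * Metric.infDist A (affineSpan ℝ {B, C} : Set (EuclideanSpace ℝ (Fin 2)))) ∧
      ∃ F : EuclideanSpace ℝ (Fin 2), F ∈ segment ℝ B C ∧
        dist A F = Metric.infDist A (affineSpan ℝ {B, C} : Set (EuclideanSpace ℝ (Fin 2))) ∧
        ∃ q : ZMod 2 → EuclideanSpace ℝ (Fin 2),
          IsClosedBilliardTraj (convexHull ℝ {A, B, C}) q ∧ q 0 = A ∧ q 1 = F ∧
            billiardLength q =
              2 * Metric.infDist A (affineSpan ℝ {B, C} : Set (EuclideanSpace ℝ (Fin 2))) := by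
  have hA' := inner_sub_nonpos_of_pi_div_two_le_angle hA
  have hspan := hABC.vectorSpan_eq_top_of_finrank_eq_two finrank_euclideanSpace_fin
  have hAline : A ∉ affineSpan ℝ {B, C} := fun h =>
    affineIndependent_iff_not_collinear_set.mp hABC (collinear_insert_of_mem_affineSpan_pair h)
  have htraj := isClosedBilliardTraj_altitude hA' hAline
  have hlen : billiardLength (fun i : ZMod 2 => ![A, altitudeFoot A B C] i) =
      2 * Metric.infDist A (affineSpan ℝ {B, C} : Set (EuclideanSpace ℝ (Fin 2))) := by
    rw [billiardLength_two, ← dist_altitudeFoot, dist_eq_norm']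
    rfl
  exact ⟨alpha_eq_ofReal (fun _ _ _ hq => hq.two_mul_infDist_le_billiardLength hABC hspan hA')
    htraj hlen, _, altitudeFoot_mem_segment hA', dist_altitudeFoot A B C, _, htraj, rfl, rfl, hlen⟩
end
end

section
/- Let K ⊆ ℝⁿ be a closed convex set with nonempty interior, and for R > 0 let K_R = K ∩ B_R, where B_R is the closed ball of radius R centered at the origin. If the set {α(K_R) : R > 0 and K_R is a convex body} is unbounded, then K contains no closed generalized billiard trajectory, i.e. α(K) = ∞. -/
open scoped ENNReal RealInnerProductSpace Pointwise

noncomputable section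

variable {E : Type*} [NormedAddCommGroup E] [InnerProductSpace ℝ E]

-- restriction lemma
lemma traj_inter {K : Set E} (hKcl : IsClosed K) {m : ℕ} [NeZero m] {q : ZMod m → E}
    (h : IsClosedBilliardTraj K q) {B : Set E} (hqB : ∀ i, q i ∈ B) :
    IsClosedBilliardTraj (K ∩ B) q := by
  obtain ⟨hm, hfr, hne, hnv⟩ := h
  refine ⟨hm, ?_, hne, ?_⟩
  · intro i
    have hqK : q i ∈ K := by
      have h1 := (hfr i).1
      rwa [hKcl.closure_eq] at h1
    constructor
    · exact subset_closure ⟨hqK, hqB i⟩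
    · intro hint
      exact (hfr i).2 (interior_mono Set.inter_subset_left hint)
  · intro i
    obtain ⟨l, nv, hl, hn1, hsup, heq⟩ := hnv i
    exact ⟨l, nv, hl, hn1, fun x hx => hsup x hx.1, heq⟩

lemma alpha_le_of_traj {S : Set E} {m : ℕ} [NeZero m] {q : ZMod m → E}
    (h : IsClosedBilliardTraj S q) : alpha S ≤ ENNReal.ofReal (billiardLength q) := by
  refine le_trans (iInf_le _ m) (le_trans (iInf_le _ ‹NeZero m›) (le_trans (iInf_le _ q) (iInf_le _ h)))
-- step 1: farthest pair exists
lemma exists_far_pair {S : Set E} (hS : IsCompact S) (hne : S.Nonempty) :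
    ∃ p ∈ S, ∃ b ∈ S, ∀ x ∈ S, ∀ y ∈ S, dist x y ≤ dist p b := by
  obtain ⟨z, hz, hmax⟩ := (hS.prod hS).exists_isMaxOn (hne.prod hne)
    (continuous_dist.continuousOn)
  exact ⟨z.1, hz.1, z.2, hz.2, fun x hx y hy => hmax (Set.mk_mem_prod hx hy)⟩

-- step 2: positive distance from nonempty interior
lemma far_pair_pos [Nontrivial E] {S : Set E} (hS : IsCompact S)
    (hint : (interior S).Nonempty) {p b : E} (hp : p ∈ S) (hb : b ∈ S)
    (hmax : ∀ x ∈ S, ∀ y ∈ S, dist x y ≤ dist p b) : p ≠ b := by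
  obtain ⟨x, hx⟩ := hint
  obtain ⟨ε, hε, hball⟩ := Metric.isOpen_iff.1 isOpen_interior x hx
  obtain ⟨u, hu⟩ := exists_ne (0 : E)
  set y := x + (ε / 2 / ‖u‖) • u with hy
  have hu0 : (0:ℝ) < ‖u‖ := norm_pos_iff.2 hu
  have hyx : dist y x = ε / 2 := by
    rw [hy, dist_eq_norm, add_sub_cancel_left, norm_smul, Real.norm_eq_abs,
      abs_of_pos (by positivity), div_mul_cancel₀ _ (ne_of_gt hu0)]
  have hyS : y ∈ S := interior_subset (hball (by
    rw [Metric.mem_ball, hyx]; linarith))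
  have hxS : x ∈ S := interior_subset hx
  intro hpb
  have := hmax y hyS x hxS
  rw [hpb, dist_self, hyx] at this
  linarith

-- step 3: frontier membership
lemma far_pair_frontier {S : Set E} (hS : IsCompact S) {p b : E} (hp : p ∈ S) (hb : b ∈ S)
    (hpb : p ≠ b) (hmax : ∀ x ∈ S, ∀ y ∈ S, dist x y ≤ dist p b) : p ∈ frontier S := by
  constructor
  · exact subset_closure hp
  · intro hint
    obtain ⟨ε, hε, hball⟩ := Metric.isOpen_iff.1 isOpen_interior p hint
    have hnd : (0:ℝ) < ‖p - b‖ := by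
      rw [norm_pos_iff, sub_ne_zero]; exact hpb
    set c : ℝ := ε / 2 / ‖p - b‖ with hc
    have hc0 : 0 < c := by positivity
    set p' := p + c • (p - b) with hp'
    have hp'p : dist p' p = ε / 2 := by
      rw [hp', dist_eq_norm, add_sub_cancel_left, norm_smul, Real.norm_eq_abs,
        abs_of_pos hc0, hc, div_mul_cancel₀ _ (ne_of_gt hnd)]
    have hp'S : p' ∈ S := interior_subset (hball (by rw [Metric.mem_ball, hp'p]; linarith))
    have h1 : dist p' b ≤ dist p b := hmax p' hp'S b hb
    have h2 : p' - b = (1 + c) • (p - b) := by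
      rw [hp']; module
    have h3 : dist p' b = (1 + c) * ‖p - b‖ := by
      rw [dist_eq_norm, h2, norm_smul, Real.norm_eq_abs, abs_of_pos (by linarith)]
    rw [h3, dist_eq_norm] at h1
    nlinarith

-- step 4: supporting normal
lemma far_pair_normal {S : Set E} {p b : E} (hp : p ∈ S) (hb : b ∈ S)
    (hmax : ∀ x ∈ S, ∀ y ∈ S, dist x y ≤ dist p b) :
    ∀ x ∈ S, ⟪x - p, p - b⟫ ≤ (0:ℝ) := by
  intro x hx
  have h1 : ‖x - b‖ ≤ ‖p - b‖ := by
    have := hmax x hx b hb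
    rwa [dist_eq_norm, dist_eq_norm] at this
  have h2 : ‖(x - p) + (p - b)‖ ^ 2 = ‖x - p‖ ^ 2 + 2 * ⟪x - p, p - b⟫ + ‖p - b‖ ^ 2 :=
    norm_add_sq_real _ _
  rw [sub_add_sub_cancel] at h2
  have h3 : ‖x - b‖ ^ 2 ≤ ‖p - b‖ ^ 2 :=
    pow_le_pow_left₀ (norm_nonneg _) h1 2
  nlinarith [sq_nonneg ‖x - p‖]

-- step 5: assemble the 2-bounce trajectory
lemma exists_two_bounce [Nontrivial E] {S : Set E} (hS : IsCompact S)
    (hint : (interior S).Nonempty) :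
    ∃ (q : ZMod 2 → E), IsClosedBilliardTraj S q ∧
      ∃ p ∈ S, ∃ b ∈ S, billiardLength q = 2 * dist p b := by
  obtain ⟨p, hp, b, hb, hmax⟩ := exists_far_pair hS ⟨_, interior_subset hint.choose_spec⟩
  have hpb : p ≠ b := far_pair_pos hS hint hp hb hmax
  have hmax' : ∀ x ∈ S, ∀ y ∈ S, dist x y ≤ dist b p := by
    intro x hx y hy; rw [dist_comm b p]; exact hmax x hx y hy
  set q : ZMod 2 → E := fun i => if i = 0 then p else b with hq
  have hq0 : q 0 = p := if_pos rfl
  have hq1 : q 1 = b := if_neg (by decide)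
  have key : ∀ i : ZMod 2, i + 1 = i - 1 := by decide
  have h01 : (0 : ZMod 2) + 1 = 1 := by decide
  have h11 : (1 : ZMod 2) + 1 = 0 := by decide
  have hnd : (0:ℝ) < ‖b - p‖ := by rw [norm_pos_iff, sub_ne_zero]; exact hpb.symm
  have hnd' : (0:ℝ) < ‖p - b‖ := by rw [norm_pos_iff, sub_ne_zero]; exact hpb
  refine ⟨q, ⟨le_refl 2, ?_, ?_, ?_⟩, p, hp, b, hb, ?_⟩
  · intro i
    fin_cases i
    · show q 0 ∈ frontier S
      rw [hq0]; exact far_pair_frontier hS hp hb hpb hmax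
    · show q 1 ∈ frontier S
      rw [hq1]; exact far_pair_frontier hS hb hp hpb.symm hmax'
  · intro i
    fin_cases i
    · show q (0 + 1) ≠ q 0
      rw [h01, hq0, hq1]; exact hpb.symm
    · show q (1 + 1) ≠ q 1
      rw [h11, hq0, hq1]; exact hpb
  · intro i
    fin_cases i
    · show ∃ (lam : ℝ) (nv : E), 0 < lam ∧ ‖nv‖ = 1 ∧ (∀ x ∈ S, ⟪x - q 0, nv⟫ ≤ (0:ℝ)) ∧
        ‖q (0+1) - q 0‖⁻¹ • (q (0+1) - q 0) - ‖q 0 - q (0-1)‖⁻¹ • (q 0 - q (0-1)) = -(lam • nv)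
      have h0m1 : (0 : ZMod 2) - 1 = 1 := by decide
      refine ⟨2, ‖p - b‖⁻¹ • (p - b), by norm_num, ?_, ?_, ?_⟩
      · rw [norm_smul, norm_inv, norm_norm, inv_mul_cancel₀ (ne_of_gt hnd')]
      · intro x hx
        rw [hq0, real_inner_smul_right]
        have := far_pair_normal hp hb hmax x hx
        have h4 : (0:ℝ) ≤ ‖p - b‖⁻¹ := by positivity
        nlinarith
      · rw [h01, h0m1, hq0, hq1]
        have e1 : b - p = -(p - b) := by abel
        rw [e1, norm_neg, smul_neg]
        module
    · show ∃ (lam : ℝ) (nv : E), 0 < lam ∧ ‖nv‖ = 1 ∧ (∀ x ∈ S, ⟪x - q 1, nv⟫ ≤ (0:ℝ)) ∧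
        ‖q (1+1) - q 1‖⁻¹ • (q (1+1) - q 1) - ‖q 1 - q (1-1)‖⁻¹ • (q 1 - q (1-1)) = -(lam • nv)
      have h1m1 : (1 : ZMod 2) - 1 = 0 := by decide
      refine ⟨2, ‖b - p‖⁻¹ • (b - p), by norm_num, ?_, ?_, ?_⟩
      · rw [norm_smul, norm_inv, norm_norm, inv_mul_cancel₀ (ne_of_gt hnd)]
      · intro x hx
        rw [hq1, real_inner_smul_right]
        have := far_pair_normal hb hp hmax' x hx
        have h4 : (0:ℝ) ≤ ‖b - p‖⁻¹ := by positivity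
        nlinarith
      · rw [h11, h1m1, hq0, hq1]
        have e1 : p - b = -(b - p) := by abel
        rw [e1, norm_neg, smul_neg]
        module
  · have huniv : (Finset.univ : Finset (ZMod 2)) = {0, 1} := by decide
    rw [billiardLength, huniv, Finset.sum_insert (by decide), Finset.sum_singleton,
      h01, h11, hq0, hq1, dist_eq_norm]
    rw [show b - p = -(p - b) by abel, norm_neg]
    ring

set_option maxHeartbeats 800000 in
/-- Let `K ⊆ ℝⁿ` be a closed convex set with nonempty interior and let
`K_R = K ∩ B_R`. If the set of values `α(K_R)`, over those `R > 0` for which `K_R` is a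
convex body, is unbounded, then `K` has no closed generalized billiard trajectory, i.e.
`α(K) = ∞`. -/
theorem alpha_eq_top_of_unbounded_truncations {n : ℕ} (K : Set (EuclideanSpace ℝ (Fin n)))
    (hKcl : IsClosed K) (hKconv : Convex ℝ K) (hKint : (interior K).Nonempty)
    (hub : ∀ C : ℝ, ∃ R : ℝ, 0 < R ∧
      (interior (K ∩ Metric.closedBall 0 R)).Nonempty ∧
      ENNReal.ofReal C < alpha (K ∩ Metric.closedBall 0 R)) :
    alpha K = ⊤ := by
  by_contra h
  have hex : ∃ (m : ℕ) (_ : NeZero m) (q : ZMod m → EuclideanSpace ℝ (Fin n)),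
      IsClosedBilliardTraj K q := by
    by_contra h2
    push_neg at h2
    apply h
    simp only [alpha, iInf_eq_top]
    intro m hm q hq
    exact absurd hq (h2 m hm q)
  obtain ⟨m, hm, q, hq⟩ := hex
  haveI := hm
  haveI : Nonempty (ZMod m) := ⟨0⟩
  haveI : Nontrivial (EuclideanSpace ℝ (Fin n)) := nontrivial_of_ne _ _ (hq.2.2.1 0)
  obtain ⟨R0, hR0⟩ : ∃ R0, ∀ i, ‖q i‖ ≤ R0 :=
    ⟨Finset.univ.sup' Finset.univ_nonempty fun i => ‖q i‖,
      fun i => Finset.le_sup' (fun j => ‖q j‖) (Finset.mem_univ i)⟩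
  set C := max (billiardLength q) (4 * R0) with hC
  obtain ⟨R, hRpos, hintR, hgt⟩ := hub C
  set S := K ∩ Metric.closedBall (0 : EuclideanSpace ℝ (Fin n)) R with hS
  have hScompact : IsCompact S := (isCompact_closedBall 0 R).inter_left hKcl
  -- a two-bounce trajectory in S bounds alpha S by 4R
  obtain ⟨q2, hq2, p, hpS, b, hbS, hlen⟩ := exists_two_bounce hScompact hintR
  have halphaS : alpha S ≤ ENNReal.ofReal (4 * R) := by
    refine le_trans (alpha_le_of_traj hq2) (ENNReal.ofReal_le_ofReal ?_)
    rw [hlen]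
    have hp' : ‖p‖ ≤ R := mem_closedBall_zero_iff.1 hpS.2
    have hb' : ‖b‖ ≤ R := mem_closedBall_zero_iff.1 hbS.2
    have : dist p b ≤ ‖p‖ + ‖b‖ := by
      rw [dist_eq_norm]; exact norm_sub_le _ _
    linarith
  -- hence C < 4R, so R0 < R
  have hClt : C < 4 * R := by
    have h1 : ENNReal.ofReal C < ENNReal.ofReal (4 * R) := lt_of_lt_of_le hgt halphaS
    exact (ENNReal.ofReal_lt_ofReal_iff (by linarith)).1 h1
  have hR0R : R0 ≤ R := by
    have := le_max_right (billiardLength q) (4 * R0)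
    rw [← hC] at this
    linarith
  -- so q is a trajectory of S
  have hqS : IsClosedBilliardTraj S q :=
    traj_inter hKcl hq fun i => mem_closedBall_zero_iff.2 ((hR0 i).trans hR0R)
  have h1 : alpha S ≤ ENNReal.ofReal (billiardLength q) := alpha_le_of_traj hqS
  have h2 : ENNReal.ofReal (billiardLength q) ≤ ENNReal.ofReal C :=
    ENNReal.ofReal_le_ofReal (le_max_left _ _)
  exact absurd (lt_of_lt_of_le hgt (h1.trans h2)).not_ge (by simp)
end
end

section
/- Let T ⊆ ℝⁿ be a convex body, let q_1, …, q_m be a closed generalized billiard trajectory of T with associated outer unit normals n_1, …, n_m (so that, with v_i = (q_{i+1} − q_i)/‖q_{i+1} − q_i‖, one has v_i − v_{i−1} = −λ_i n_i with λ_i > 0 and ⟨x − q_i, n_i⟩ ≤ 0 for all x ∈ T), and let r > 0. Then there is no vector t ∈ ℝⁿ such that q_i + r n_i + t lies in the interior of T + rB for every i = 1, …, m, where B is the closed Euclidean unit ball. -/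
/-!
Since `T + rB` lies in the half-space `⟪y - q i, n i⟫ ≤ r`, whose boundary contains
`q i + r n i`, a translate by `t` of that point is interior only if `⟪t, n i⟫ < 0`.
But the reflection law `v i - v (i - 1) = -λ i n i` telescopes around the closed trajectory to
`∑ λ i n i = 0`, so `∑ λ i ⟪t, n i⟫ = 0`, which is impossible when every term is negative.
-/

open scoped ENNReal RealInnerProductSpace Pointwise

noncomputable section

variable {E : Type*} [NormedAddCommGroup E] [InnerProductSpace ℝ E]

theorem inner_lt_of_mem_interior_of_forall_inner_le {S : Set E} {u : E} {c : ℝ} (hu : u ≠ 0)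
    (hS : ∀ y ∈ S, ⟪y, u⟫ ≤ c) {y : E} (hy : y ∈ interior S) : ⟪y, u⟫ < c := by
  have hne : innerSL ℝ u ≠ 0 := fun h => hu (by simpa using congrArg (fun f => f u) h)
  have hmaps : innerSL ℝ u '' interior S ⊆ Set.Iic c := by
    rintro _ ⟨z, hz, rfl⟩
    simpa [real_inner_comm] using hS z (interior_subset hz)
  have := interior_maximal hmaps ((innerSL ℝ u).isOpenMap_of_ne_zero hne _ isOpen_interior)
  simpa [real_inner_comm] using this ⟨y, hy, rfl⟩

theorem inner_sub_le_of_mem_add_closedBall {K : Set E} {p u : E} (hu : ‖u‖ ≤ 1)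
    (hK : ∀ x ∈ K, ⟪x - p, u⟫ ≤ 0) {r : ℝ} {y : E} (hy : y ∈ K + Metric.closedBall 0 r) :
    ⟪y - p, u⟫ ≤ r := by
  obtain ⟨x, hx, b, hb, rfl⟩ := hy
  have hb' : ‖b‖ ≤ r := by simpa using hb
  calc ⟪x + b - p, u⟫ = ⟪x - p, u⟫ + ⟪b, u⟫ := by rw [add_sub_right_comm, inner_add_left]
    _ ≤ 0 + ‖b‖ * ‖u‖ := add_le_add (hK x hx) (real_inner_le_norm b u)
    _ ≤ r := by nlinarith [norm_nonneg b]

theorem inner_neg_of_add_smul_add_mem_interior {K : Set E} {p u t : E} (hu : ‖u‖ = 1)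
    (hK : ∀ x ∈ K, ⟪x - p, u⟫ ≤ 0) {r : ℝ}
    (ht : p + r • u + t ∈ interior (K + Metric.closedBall 0 r)) : ⟪t, u⟫ < 0 := by
  have hu0 : u ≠ 0 := norm_ne_zero_iff.mp (by rw [hu]; exact one_ne_zero)
  have hlt := inner_lt_of_mem_interior_of_forall_inner_le (c := ⟪p, u⟫ + r) hu0
    (fun y hy => by
      have := inner_sub_le_of_mem_add_closedBall hu.le hK hy
      rw [inner_sub_left] at this
      linarith) ht
  have huu : ⟪u, u⟫ = 1 := by rw [real_inner_self_eq_norm_sq, hu, one_pow]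
  rw [inner_add_left, inner_add_left, real_inner_smul_left, huu] at hlt
  linarith

theorem Fintype.sum_sub_comp_sub_eq_zero {G M : Type*} [AddGroup G] [Fintype G]
    [AddCommGroup M] (f : G → M) (a : G) : ∑ i, (f i - f (i - a)) = 0 := by
  rw [Finset.sum_sub_distrib, sub_eq_zero]
  exact (Fintype.sum_equiv (Equiv.subRight a) _ _ fun _ => rfl).symm

theorem sum_smul_eq_zero_of_reflection {m : ℕ} [NeZero m] (q : ZMod m → E) (lam : ZMod m → ℝ)
    (nv : ZMod m → E)
    (hrefl : ∀ i : ZMod m,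
      ‖q (i + 1) - q i‖⁻¹ • (q (i + 1) - q i)
        - ‖q i - q (i - 1)‖⁻¹ • (q i - q (i - 1)) = -(lam i • nv i)) :
    ∑ i, lam i • nv i = 0 := by
  set v : ZMod m → E := fun i => ‖q (i + 1) - q i‖⁻¹ • (q (i + 1) - q i)
  have hv : ∀ i, lam i • nv i = -(v i - v (i - 1)) := fun i => by
    simp only [v, sub_add_cancel]; rw [hrefl i, neg_neg]
  simp_rw [hv, Finset.sum_neg_distrib, Fintype.sum_sub_comp_sub_eq_zero, neg_zero]

theorem no_translation_into_interior_general {n : ℕ} (T : Set (EuclideanSpace ℝ (Fin n)))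
    {m : ℕ} [NeZero m] (q : ZMod m → EuclideanSpace ℝ (Fin n))
    (lam : ZMod m → ℝ) (nv : ZMod m → EuclideanSpace ℝ (Fin n))
    (hlam : ∀ i, 0 < lam i) (hnv : ∀ i, ‖nv i‖ = 1)
    (hsupp : ∀ i, ∀ x ∈ T, ⟪x - q i, nv i⟫ ≤ (0 : ℝ))
    (hrefl : ∀ i : ZMod m,
      ‖q (i + 1) - q i‖⁻¹ • (q (i + 1) - q i)
        - ‖q i - q (i - 1)‖⁻¹ • (q i - q (i - 1)) = -(lam i • nv i))
    (r : ℝ) :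
    ¬ ∃ t : EuclideanSpace ℝ (Fin n), ∀ i : ZMod m,
      q i + r • nv i + t ∈ interior (T + Metric.closedBall 0 r) := by
  rintro ⟨t, ht⟩
  have hinward : ∀ i, ⟪t, nv i⟫ < 0 := fun i =>
    inner_neg_of_add_smul_add_mem_interior (hnv i) (hsupp i) (ht i)
  have hneg : ∑ i, lam i * ⟪t, nv i⟫ < 0 :=
    Finset.sum_neg (fun i _ => mul_neg_of_pos_of_neg (hlam i) (hinward i)) Finset.univ_nonempty
  have hzero : ∑ i, lam i * ⟪t, nv i⟫ = 0 := by
    simp_rw [← real_inner_smul_right, ← inner_sum, sum_smul_eq_zero_of_reflection q lam nv hrefl,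
      inner_zero_right]
  exact hneg.ne hzero

/-- If `q` is a closed generalized billiard trajectory of the convex body
`T ⊆ ℝⁿ` with outer unit normals `nv i`, and `r > 0`, then no translate of the configuration
`(q i + r • nv i)` lies in the interior of `T + rB`. -/
theorem no_translation_into_interior {n : ℕ} (T : Set (EuclideanSpace ℝ (Fin n)))
    (hTconv : Convex ℝ T) (hTcomp : IsCompact T) (hTint : (interior T).Nonempty)
    {m : ℕ} [NeZero m] (hm : 2 ≤ m) (q : ZMod m → EuclideanSpace ℝ (Fin n))
    (lam : ZMod m → ℝ) (nv : ZMod m → EuclideanSpace ℝ (Fin n))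
    (hfr : ∀ i, q i ∈ frontier T) (hne : ∀ i : ZMod m, q (i + 1) ≠ q i)
    (hlam : ∀ i, 0 < lam i) (hnv : ∀ i, ‖nv i‖ = 1)
    (hsupp : ∀ i, ∀ x ∈ T, ⟪x - q i, nv i⟫ ≤ (0 : ℝ))
    (hrefl : ∀ i : ZMod m,
      ‖q (i + 1) - q i‖⁻¹ • (q (i + 1) - q i)
        - ‖q i - q (i - 1)‖⁻¹ • (q i - q (i - 1)) = -(lam i • nv i))
    (r : ℝ) (hrpos : 0 < r) :
    ¬ ∃ t : EuclideanSpace ℝ (Fin n), ∀ i : ZMod m,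
      q i + r • nv i + t ∈ interior (T + Metric.closedBall 0 r) :=
  no_translation_into_interior_general T q lam nv hlam hnv hsupp hrefl r
end
end

section
/- Let T ⊆ ℝ² be a triangle with vertices A, B, C and let z be an interior point of T. Then the polar triangle T^z is an acute triangle if and only if each of the three angles ∠AzB, ∠BzC, ∠CzA is greater than π/2; equivalently, if and only if z lies in the intersection of the three open disks having the sides of T as diameters. -/
open scoped ENNReal RealInnerProductSpace Pointwise

noncomputable section

variable {E : Type*} [NormedAddCommGroup E] [InnerProductSpace ℝ E]

/-- `S` is an acute triangle: the convex hull of three affinely independent points all of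
whose angles are less than `π/2`. -/
def IsAcuteTriangle (S : Set (EuclideanSpace ℝ (Fin 2))) : Prop :=
  ∃ A B C : EuclideanSpace ℝ (Fin 2), AffineIndependent ℝ ![A, B, C] ∧
    S = convexHull ℝ {A, B, C} ∧
    EuclideanGeometry.angle B A C < Real.pi / 2 ∧
    EuclideanGeometry.angle A B C < Real.pi / 2 ∧
    EuclideanGeometry.angle A C B < Real.pi / 2

open Set Real Module
open scoped EuclideanGeometry

/-!
Put `u = A - z`, `v = B - z`, `w = C - z`. As `z` is interior, `α u + β v + γ w = 0` with positive
barycentric coordinates `α, β, γ`, and `T^z = {y | ⟪u, y⟫ ≤ 1, ⟪v, y⟫ ≤ 1, ⟪w, y⟫ ≤ 1}` is the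
triangle whose vertex `P_w` is the intersection of the lines `⟪u, ·⟫ = 1` and `⟪v, ·⟫ = 1`, and
similarly for `P_u`, `P_v`. The edges leaving `P_w` are orthogonal to `v` and to `u` and point to
where `⟪u, ·⟫`, resp. `⟪v, ·⟫`, decreases; in the plane this forces the angle of `T^z` at `P_w` to
be acute exactly when `⟪u, v⟫ < 0`, i.e. when `∠AzB > π/2`, i.e. (Thales) when `z` lies in the
open disk with diameter `AB`. The vertices of `T^z` are recovered from the set as its extreme
points, so acuteness of the set `T^z` is acuteness of this vertex triple.
-/

theorem convex_setOf_inner_le (a : E) (r : ℝ) : Convex ℝ {y : E | ⟪a, y⟫ ≤ r} :=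
  convex_halfSpace_le (innerₛₗ ℝ a).isLinear r

theorem polarBody_convexHull (s : Set E) (z : E) :
    polarBody (convexHull ℝ s) z = polarBody s z := by
  ext y
  have key (x : E) : ⟪x - z, y⟫ ≤ 1 ↔ ⟪y, x⟫ ≤ ⟪y, z⟫ + 1 := by
    rw [inner_sub_left, real_inner_comm x, real_inner_comm z, sub_le_iff_le_add']
  refine ⟨fun hy x hx ↦ hy x (subset_convexHull ℝ s hx), fun hy x hx ↦ (key x).2 ?_⟩
  exact convexHull_min (fun x hx ↦ (key x).1 (hy x hx)) (convex_setOf_inner_le y _) hx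

namespace InnerProductGeometry

theorem angle_lt_pi_div_two_iff_inner_pos (x y : E) : angle x y < π / 2 ↔ 0 < ⟪x, y⟫ := by
  rw [angle, Real.arccos_lt_pi_div_two, div_pos_iff]
  refine ⟨?_, fun h ↦ .inl ⟨h, h.trans_le (real_inner_le_norm x y)⟩⟩
  rintro (⟨h, -⟩ | ⟨-, h⟩)
  · exact h
  · exact absurd h (not_lt.2 (by positivity))

theorem pi_div_two_lt_angle_iff_inner_neg (x y : E) : π / 2 < angle x y ↔ ⟪x, y⟫ < 0 := by
  rw [← neg_pos, ← inner_neg_right, ← angle_lt_pi_div_two_iff_inner_pos, angle_neg_right]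
  constructor <;> intro h <;> linarith

end InnerProductGeometry

theorem dist_midpoint_sq (A B z : E) :
    dist z (midpoint ℝ A B) ^ 2 = (dist A B / 2) ^ 2 + ⟪A - z, B - z⟫ := by
  have hm : z - midpoint ℝ A B = -(2⁻¹ : ℝ) • ((A - z) + (B - z)) := by
    rw [midpoint_eq_smul_add, invOf_eq_inv]; module
  have hAB : A - B = (A - z) - (B - z) := by abel
  rw [dist_eq_norm, dist_eq_norm, hm, hAB, norm_smul, div_pow, mul_pow,
    norm_add_sq_real (A - z), norm_sub_sq_real (A - z), norm_neg, norm_inv, Real.norm_ofNat]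
  ring

theorem mem_ball_midpoint_iff_inner_neg (A B z : E) :
    z ∈ Metric.ball (midpoint ℝ A B) (dist A B / 2) ↔ ⟪A - z, B - z⟫ < 0 := by
  rw [Metric.mem_ball, ← sq_lt_sq₀ dist_nonneg (by positivity), dist_midpoint_sq]
  constructor <;> intro h <;> linarith

theorem eq_zero_of_forall_inner_sub_eq_zero {s : Set E} (hs : affineSpan ℝ s = ⊤) {z x : E}
    (h : ∀ p ∈ s, ⟪p - z, x⟫ = 0) : x = 0 := by
  have hspan : vectorSpan ℝ s ≤ LinearMap.ker (innerₛₗ ℝ x) := by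
    rw [vectorSpan_def, Submodule.span_le]
    rintro _ ⟨p, hp, q, hq, rfl⟩
    have hpq : p - q = (p - z) - (q - z) := by abel
    change ⟪x, p - q⟫ = 0
    rw [hpq, real_inner_comm, inner_sub_left, h p hp, h q hq, sub_self]
  have hx : x ∈ LinearMap.ker (innerₛₗ ℝ x) :=
    hspan (by simp [AffineSubspace.vectorSpan_eq_top_of_affineSpan_eq_top ℝ E E hs])
  simpa using hx

theorem affineIndependent_of_inner_eq_one {u v P Q R : E} (hPu : ⟪u, P⟫ = 1)
    (hPv : ⟪v, P⟫ = 1) (hQu : ⟪u, Q⟫ ≠ 1) (hQv : ⟪v, Q⟫ = 1) (hRu : ⟪u, R⟫ = 1)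
    (hRv : ⟪v, R⟫ ≠ 1) : AffineIndependent ℝ ![Q, R, P] := by
  rw [affineIndependent_iff_not_collinear_set, collinear_iff_of_mem (p₀ := P) (by simp)]
  rintro ⟨d, hd⟩
  obtain ⟨r, rfl⟩ := hd Q (by simp)
  obtain ⟨s, rfl⟩ := hd R (by simp)
  simp only [vadd_eq_add, inner_add_right, real_inner_smul_right] at *
  have hr : r ≠ 0 := by rintro rfl; simp [hPu] at hQu
  have hvd : ⟪v, d⟫ = 0 := by
    rcases mul_eq_zero.1 (show r * ⟪v, d⟫ = 0 by linarith) with h | h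
    · exact absurd h hr
    · exact h
  exact hRv (by rw [hvd, mul_zero, zero_add, hPv])

theorem smul_add_smul_add_smul_mem_convexHull {a b c : ℝ} (ha : 0 ≤ a) (hb : 0 ≤ b) (hc : 0 ≤ c)
    (habc : a + b + c = 1) (x y z : E) : a • x + b • y + c • z ∈ convexHull ℝ {x, y, z} := by
  have := (convex_convexHull ℝ ({x, y, z} : Set E)).sum_mem (t := Finset.univ) (w := ![a, b, c])
    (z := ![x, y, z]) (by simp [Fin.forall_fin_succ, ha, hb, hc])
    (by simp [Fin.sum_univ_three, habc])
    (fun i _ ↦ subset_convexHull ℝ _ (by fin_cases i <;> simp))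
  simpa [Fin.sum_univ_three] using this

theorem setOf_inner_le_one_eq_convexHull {u v w P₁ P₂ P₃ : E} {α β γ : ℝ} (hα : 0 < α)
    (hβ : 0 < β) (hγ : 0 < γ) (hsum : α + β + γ = 1) (hrel : α • u + β • v + γ • w = 0)
    (huv : ∀ x, ⟪u, x⟫ = 0 → ⟪v, x⟫ = 0 → x = 0)
    (h₁ : ⟪v, P₁⟫ = 1 ∧ ⟪w, P₁⟫ = 1) (h₂ : ⟪w, P₂⟫ = 1 ∧ ⟪u, P₂⟫ = 1)
    (h₃ : ⟪u, P₃⟫ = 1 ∧ ⟪v, P₃⟫ = 1) :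
    {y | ⟪u, y⟫ ≤ 1 ∧ ⟪v, y⟫ ≤ 1 ∧ ⟪w, y⟫ ≤ 1} = convexHull ℝ {P₁, P₂, P₃} := by
  have hrel' (y : E) : α * ⟪u, y⟫ + β * ⟪v, y⟫ + γ * ⟪w, y⟫ = 0 := by
    simpa [inner_add_left, real_inner_smul_left] using congrArg (⟪·, y⟫) hrel
  have d₁ := hrel' P₁
  have d₂ := hrel' P₂
  have d₃ := hrel' P₃
  rw [h₁.1, h₁.2] at d₁
  rw [h₂.1, h₂.2] at d₂
  rw [h₃.1, h₃.2] at d₃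
  refine subset_antisymm ?_ (convexHull_min ?_ ?_)
  · rintro y ⟨hu, hv, hw⟩
    have hy : (α * (1 - ⟪u, y⟫)) • P₁ + (β * (1 - ⟪v, y⟫)) • P₂ + (γ * (1 - ⟪w, y⟫)) • P₃ = y := by
      rw [← sub_eq_zero]
      apply huv <;> simp only [inner_sub_right, inner_add_right, real_inner_smul_right, h₁, h₂, h₃]
      · linear_combination (1 - ⟪u, y⟫) * d₁ - hrel' y + ⟪u, y⟫ * hsum
      · linear_combination (1 - ⟪v, y⟫) * d₂ - hrel' y + ⟪v, y⟫ * hsum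
    rw [← hy]
    refine smul_add_smul_add_smul_mem_convexHull ?_ ?_ ?_ ?_ _ _ _
    all_goals first | positivity | nlinarith [hrel' y]
  · rintro _ (rfl | rfl | rfl) <;> refine ⟨?_, ?_, ?_⟩ <;> nlinarith
  · exact (convex_setOf_inner_le u 1).inter ((convex_setOf_inner_le v 1).inter
      (convex_setOf_inner_le w 1))

namespace AffineBasis

variable {ι V : Type*} [Fintype ι] [AddCommGroup V] [Module ℝ V]

theorem eq_of_coord_eq_zero (b : AffineBasis ι ℝ V) {i : ι} {x : V}
    (hx : ∀ j ≠ i, b.coord j x = 0) : x = b i := by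
  refine b.ext_elem fun j ↦ ?_
  by_cases hj : j = i
  · subst hj
    have hsum := b.sum_coord_apply_eq_one x
    rwa [Finset.sum_eq_single j (fun k _ hk ↦ hx k hk) (by simp), ← b.coord_apply_eq j] at hsum
  · rw [hx j hj, b.coord_apply_ne hj]

theorem mem_extremePoints_convexHull (b : AffineBasis ι ℝ V) (i : ι) :
    b i ∈ (convexHull ℝ (range b)).extremePoints ℝ := by
  refine ⟨subset_convexHull ℝ _ (mem_range_self i), fun x₁ hx₁ x₂ hx₂ hi ↦ ?_⟩
  rw [b.convexHull_eq_nonneg_coord] at hx₁ hx₂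
  obtain ⟨s, t, hs, ht, hst, hx⟩ := hi
  refine b.eq_of_coord_eq_zero fun j hj ↦ ?_
  -- `b.coord j` is nonnegative at `x₁` and `x₂` and vanishes at their positive combination `b i`
  have h := Convex.combo_affine_apply (f := b.coord j) (x := x₁) (y := x₂) hst
  rw [hx, b.coord_apply_ne hj, smul_eq_mul, smul_eq_mul] at h
  nlinarith [hx₁ j, hx₂ j]

theorem extremePoints_convexHull (b : AffineBasis ι ℝ V) :
    (convexHull ℝ (range b)).extremePoints ℝ = range b :=
  subset_antisymm extremePoints_convexHull_subset
    (range_subset_iff.2 b.mem_extremePoints_convexHull)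

end AffineBasis

theorem angles_lt_pi_div_two_iff_forall_mem {X Y Z : E} (hXY : X ≠ Y) (hXZ : X ≠ Z) (hYZ : Y ≠ Z) :
    (∠ Y X Z < π / 2 ∧ ∠ X Y Z < π / 2 ∧ ∠ X Z Y < π / 2) ↔
      ∀ p ∈ ({X, Y, Z} : Set E), ∀ q ∈ ({X, Y, Z} : Set E), ∀ r ∈ ({X, Y, Z} : Set E),
        q ≠ p → r ≠ p → ∠ q p r < π / 2 := by
  refine ⟨fun ⟨hX, hY, hZ⟩ ↦ ?_, fun h ↦ ⟨h X (by simp) Y (by simp) Z (by simp) hXY.symm hXZ.symm,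
    h Y (by simp) X (by simp) Z (by simp) hXY hYZ.symm, h Z (by simp) X (by simp) Y (by simp) hXZ hYZ⟩⟩
  simp only [mem_insert_iff, mem_singleton_iff]
  rintro p (rfl | rfl | rfl) q (rfl | rfl | rfl) r (rfl | rfl | rfl) hq hr <;>
    simp_all [EuclideanGeometry.angle_comm, EuclideanGeometry.angle_self_of_ne, Real.pi_pos]

section Plane

variable [Fact (finrank ℝ E = 2)]

attribute [local instance] FiniteDimensional.of_fact_finrank_eq_two

theorem inner_pos_iff_inner_neg_of_inner_eq_zero {u v x y : E} (hvx : ⟪v, x⟫ = 0)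
    (huy : ⟪u, y⟫ = 0) (hux : ⟪u, x⟫ < 0) (hvy : ⟪v, y⟫ < 0) : 0 < ⟪x, y⟫ ↔ ⟪u, v⟫ < 0 := by
  let o : Orientation ℝ E (Fin 2) := (finBasisOfFinrankEq ℝ E Fact.out).orientation
  have hxy := o.inner_mul_inner_add_areaForm_mul_areaForm v x y
  have hxu := o.inner_mul_inner_add_areaForm_mul_areaForm v x u
  have huy' := o.inner_mul_inner_add_areaForm_mul_areaForm v u y
  rw [hvx, zero_mul] at hxy hxu
  rw [huy, mul_zero, real_inner_comm u v] at huy'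
  rw [real_inner_comm u x] at hxu
  have hv : 0 < ‖v‖ ^ 2 := by
    have : v ≠ 0 := by rintro rfl; simp at hvy
    positivity
  have hω : 0 < o.areaForm v u ^ 2 := by
    have : o.areaForm v u ≠ 0 := by
      intro h
      rw [h, mul_zero, zero_add] at hxu
      nlinarith
    positivity
  have key : ⟪u, v⟫ * (⟪v, y⟫ * ⟪u, x⟫ * ‖v‖ ^ 2) = -(o.areaForm v u ^ 2 * ‖v‖ ^ 2) * ⟪x, y⟫ := by
    linear_combination -⟪u, v⟫ * ⟪v, y⟫ * hxu - o.areaForm v u ^ 2 * hxy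
      + o.areaForm v x * o.areaForm v u * huy'
  have hP : 0 < ⟪v, y⟫ * ⟪u, x⟫ * ‖v‖ ^ 2 := mul_pos (mul_pos_of_neg_of_neg hvy hux) hv
  have hQ : 0 < o.areaForm v u ^ 2 * ‖v‖ ^ 2 := mul_pos hω hv
  generalize ⟪v, y⟫ * ⟪u, x⟫ * ‖v‖ ^ 2 = P at key hP
  generalize o.areaForm v u ^ 2 * ‖v‖ ^ 2 = Q at key hQ
  constructor <;> intro h <;> nlinarith

theorem angle_lt_pi_div_two_iff_of_inner_eq_one {u v P Q R : E} (hPu : ⟪u, P⟫ = 1)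
    (hPv : ⟪v, P⟫ = 1) (hQu : ⟪u, Q⟫ < 1) (hQv : ⟪v, Q⟫ = 1) (hRu : ⟪u, R⟫ = 1)
    (hRv : ⟪v, R⟫ < 1) : ∠ Q P R < π / 2 ↔ ⟪u, v⟫ < 0 := by
  rw [EuclideanGeometry.angle, InnerProductGeometry.angle_lt_pi_div_two_iff_inner_pos]
  apply inner_pos_iff_inner_neg_of_inner_eq_zero <;>
    simp only [vsub_eq_sub, inner_sub_right] <;> linarith

theorem exists_inner_eq_inner_eq {u v : E} (huv : ∀ x, ⟪u, x⟫ = 0 → ⟪v, x⟫ = 0 → x = 0)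
    (a b : ℝ) : ∃ P, ⟪u, P⟫ = a ∧ ⟪v, P⟫ = b := by
  let L : E →ₗ[ℝ] ℝ × ℝ := (innerₛₗ ℝ u).prod (innerₛₗ ℝ v)
  have hL : Function.Injective L := by
    rw [← LinearMap.ker_eq_bot, LinearMap.ker_eq_bot']
    exact fun x hx ↦ huv x (congrArg Prod.fst hx) (congrArg Prod.snd hx)
  obtain ⟨P, hP⟩ := (LinearMap.injective_iff_surjective_of_finrank_eq_finrank
    (by simp [Fact.out]) |>.1 hL) (a, b)
  exact ⟨P, congrArg Prod.fst hP, congrArg Prod.snd hP⟩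

theorem exists_polar_triangle {u v w : E} {α β γ : ℝ} (hα : 0 < α) (hβ : 0 < β) (hγ : 0 < γ)
    (hsum : α + β + γ = 1) (hrel : α • u + β • v + γ • w = 0)
    (hspan : ∀ x, ⟪u, x⟫ = 0 → ⟪v, x⟫ = 0 → ⟪w, x⟫ = 0 → x = 0) :
    ∃ P₁ P₂ P₃ : E, AffineIndependent ℝ ![P₁, P₂, P₃] ∧
      {y | ⟪u, y⟫ ≤ 1 ∧ ⟪v, y⟫ ≤ 1 ∧ ⟪w, y⟫ ≤ 1} = convexHull ℝ {P₁, P₂, P₃} ∧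
      ((∠ P₂ P₁ P₃ < π / 2 ∧ ∠ P₁ P₂ P₃ < π / 2 ∧ ∠ P₁ P₃ P₂ < π / 2) ↔
        (⟪u, v⟫ < 0 ∧ ⟪v, w⟫ < 0 ∧ ⟪w, u⟫ < 0)) := by
  have hrel' (y : E) : α * ⟪u, y⟫ + β * ⟪v, y⟫ + γ * ⟪w, y⟫ = 0 := by
    simpa [inner_add_left, real_inner_smul_left] using congrArg (⟪·, y⟫) hrel
  have huv (x : E) (hu : ⟪u, x⟫ = 0) (hv : ⟪v, x⟫ = 0) : x = 0 := by
    refine hspan x hu hv ?_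
    have := hrel' x
    rw [hu, hv] at this
    simpa [hγ.ne'] using this
  -- `hrel'` turns `⟪w, P₁⟫ = 1` into `⟪u, P₁⟫ = 1 - α⁻¹`, and similarly for `P₂`
  obtain ⟨P₁, h₁u, h₁v⟩ := exists_inner_eq_inner_eq huv (1 - α⁻¹) 1
  obtain ⟨P₂, h₂u, h₂v⟩ := exists_inner_eq_inner_eq huv 1 (1 - β⁻¹)
  obtain ⟨P₃, h₃u, h₃v⟩ := exists_inner_eq_inner_eq huv 1 1
  have h₁w : ⟪w, P₁⟫ = 1 := by
    have := hrel' P₁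
    rw [h₁u, h₁v, mul_sub, mul_inv_cancel₀ hα.ne'] at this
    exact mul_left_cancel₀ hγ.ne' (by linarith)
  have h₂w : ⟪w, P₂⟫ = 1 := by
    have := hrel' P₂
    rw [h₂u, h₂v, mul_sub, mul_inv_cancel₀ hβ.ne'] at this
    exact mul_left_cancel₀ hγ.ne' (by linarith)
  have h₃w : ⟪w, P₃⟫ < 1 := by nlinarith [hrel' P₃]
  have h₁u' : ⟪u, P₁⟫ < 1 := by rw [h₁u]; linarith [inv_pos.2 hα]
  have h₂v' : ⟪v, P₂⟫ < 1 := by rw [h₂v]; linarith [inv_pos.2 hβ]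
  refine ⟨P₁, P₂, P₃, affineIndependent_of_inner_eq_one h₃u h₃v h₁u'.ne h₁v h₂u h₂v'.ne,
    setOf_inner_le_one_eq_convexHull hα hβ hγ hsum hrel huv ⟨h₁v, h₁w⟩ ⟨h₂w, h₂u⟩ ⟨h₃u, h₃v⟩, ?_⟩
  rw [angle_lt_pi_div_two_iff_of_inner_eq_one h₁v h₁w h₂v' h₂w h₃v h₃w,
    EuclideanGeometry.angle_comm P₁, angle_lt_pi_div_two_iff_of_inner_eq_one h₂w h₂u h₃w h₃u h₁w h₁u',
    angle_lt_pi_div_two_iff_of_inner_eq_one h₃u h₃v h₁u' h₁v h₂u h₂v']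
  tauto

def AffineIndependent.toAffineBasis {A B C : E}
    (h : AffineIndependent ℝ ![A, B, C]) : AffineBasis (Fin 3) ℝ E :=
  ⟨![A, B, C], h, h.affineSpan_eq_top_iff_card_eq_finrank_add_one.2 (by simp [Fact.out])⟩

theorem AffineIndependent.range_toAffineBasis {A B C : E} (h : AffineIndependent ℝ ![A, B, C]) :
    range h.toAffineBasis = {A, B, C} := by
  change range ![A, B, C] = _
  rw [Matrix.range_cons, Matrix.range_cons_cons_empty, singleton_union]

theorem AffineIndependent.extremePoints_convexHull {A B C : E}
    (h : AffineIndependent ℝ ![A, B, C]) :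
    (convexHull ℝ {A, B, C}).extremePoints ℝ = {A, B, C} := by
  rw [← h.range_toAffineBasis, AffineBasis.extremePoints_convexHull]

theorem exists_pos_smul_sub_eq_zero_of_mem_interior {A B C z : E}
    (h : AffineIndependent ℝ ![A, B, C]) (hz : z ∈ interior (convexHull ℝ {A, B, C})) :
    ∃ α β γ : ℝ, 0 < α ∧ 0 < β ∧ 0 < γ ∧ α + β + γ = 1 ∧
      α • (A - z) + β • (B - z) + γ • (C - z) = 0 := by
  set b := h.toAffineBasis
  rw [← h.range_toAffineBasis, b.interior_convexHull] at hz
  have hsum := b.sum_coord_apply_eq_one z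
  have hcomb := b.linear_combination_coord_eq_self z
  rw [Fin.sum_univ_three] at hsum hcomb
  change _ • A + _ • B + _ • C = z at hcomb
  refine ⟨_, _, _, hz 0, hz 1, hz 2, hsum, ?_⟩
  linear_combination (norm := module) hcomb - hsum • z

end Plane

instance : Fact (Module.finrank ℝ (EuclideanSpace ℝ (Fin 2)) = 2) := ⟨finrank_euclideanSpace_fin⟩

theorem isAcuteTriangle_convexHull_iff {P₁ P₂ P₃ : EuclideanSpace ℝ (Fin 2)}
    (hP : AffineIndependent ℝ ![P₁, P₂, P₃]) :
    IsAcuteTriangle (convexHull ℝ {P₁, P₂, P₃}) ↔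
      ∠ P₂ P₁ P₃ < π / 2 ∧ ∠ P₁ P₂ P₃ < π / 2 ∧ ∠ P₁ P₃ P₂ < π / 2 := by
  refine ⟨fun ⟨X, Y, Z, hXYZ, hS, hX, hY, hZ⟩ ↦ ?_, fun h ↦ ⟨P₁, P₂, P₃, hP, rfl, h⟩⟩
  have hvert : ({X, Y, Z} : Set _) = {P₁, P₂, P₃} := by
    rw [← hXYZ.extremePoints_convexHull, ← hS, hP.extremePoints_convexHull]
  have hne {A B C : EuclideanSpace ℝ (Fin 2)} (h : AffineIndependent ℝ ![A, B, C]) :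
      A ≠ B ∧ A ≠ C ∧ B ≠ C :=
    ⟨h.injective.ne (a₁ := 0) (a₂ := 1) (by decide), h.injective.ne (a₁ := 0) (a₂ := 2) (by decide),
      h.injective.ne (a₁ := 1) (a₂ := 2) (by decide)⟩
  obtain ⟨h₁₂, h₁₃, h₂₃⟩ := hne hP
  obtain ⟨hXY, hXZ, hYZ⟩ := hne hXYZ
  rw [angles_lt_pi_div_two_iff_forall_mem h₁₂ h₁₃ h₂₃, ← hvert,
    ← angles_lt_pi_div_two_iff_forall_mem hXY hXZ hYZ]
  exact ⟨hX, hY, hZ⟩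

/-- For a triangle `T` with vertices `A, B, C` and `z` interior to `T`,
the polar triangle `T^z` is acute iff all three angles `∠AzB, ∠BzC, ∠CzA` exceed `π/2`,
equivalently iff `z` lies in all three open disks having the sides of `T` as diameters. -/
theorem polar_triangle_acute_iff (A B C z : EuclideanSpace ℝ (Fin 2))
    (hABC : AffineIndependent ℝ ![A, B, C])
    (hz : z ∈ interior (convexHull ℝ {A, B, C})) :
    (IsAcuteTriangle (polarBody (convexHull ℝ {A, B, C}) z) ↔
      (Real.pi / 2 < EuclideanGeometry.angle A z B ∧
       Real.pi / 2 < EuclideanGeometry.angle B z C ∧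
       Real.pi / 2 < EuclideanGeometry.angle C z A)) ∧
    (IsAcuteTriangle (polarBody (convexHull ℝ {A, B, C}) z) ↔
      (z ∈ Metric.ball (midpoint ℝ A B) (dist A B / 2) ∧
       z ∈ Metric.ball (midpoint ℝ B C) (dist B C / 2) ∧
       z ∈ Metric.ball (midpoint ℝ C A) (dist C A / 2))) := by
  obtain ⟨α, β, γ, hα, hβ, hγ, hsum, hrel⟩ := exists_pos_smul_sub_eq_zero_of_mem_interior hABC hz
  have hspan (x : EuclideanSpace ℝ (Fin 2)) (hA : ⟪A - z, x⟫ = 0) (hB : ⟪B - z, x⟫ = 0)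
      (hC : ⟪C - z, x⟫ = 0) : x = 0 := by
    refine eq_zero_of_forall_inner_sub_eq_zero (s := {A, B, C}) ?_ (z := z) ?_
    · rw [← hABC.range_toAffineBasis]
      exact hABC.toAffineBasis.tot
    · rintro p (rfl | rfl | rfl) <;> assumption
  obtain ⟨P₁, P₂, P₃, hP, hhull, hacute⟩ := exists_polar_triangle hα hβ hγ hsum hrel hspan
  have hpolar : polarBody (convexHull ℝ {A, B, C}) z =
      {y | ⟪A - z, y⟫ ≤ 1 ∧ ⟪B - z, y⟫ ≤ 1 ∧ ⟪C - z, y⟫ ≤ 1} := by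
    rw [polarBody_convexHull]
    ext y
    simp [polarBody]
  rw [hpolar, hhull, isAcuteTriangle_convexHull_iff hP, hacute]
  simp only [EuclideanGeometry.angle, vsub_eq_sub,
    InnerProductGeometry.pi_div_two_lt_angle_iff_inner_neg, mem_ball_midpoint_iff_inner_neg, and_self]
end
end

section
/- Let K ⊆ ℝ² be a convex body and let z ∈ ℝ² with z ∉ K. Then the polar body K^z contains no closed generalized billiard trajectory, i.e. α(K^z) = ∞. -/
open scoped ENNReal RealInnerProductSpace Pointwise

noncomputable section

variable {E : Type*} [NormedAddCommGroup E] [InnerProductSpace ℝ E]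

/-- If `K ⊆ ℝ²` is a convex body and `z ∉ K`, then the polar body `K^z`
has no closed generalized billiard trajectory: `α(K^z) = ∞`. -/
theorem alpha_polar_eq_top_of_not_mem (K : Set (EuclideanSpace ℝ (Fin 2)))
    (hKconv : Convex ℝ K) (hKcomp : IsCompact K) (hKint : (interior K).Nonempty)
    (z : EuclideanSpace ℝ (Fin 2)) (hz : z ∉ K) :
    alpha (polarBody K z) = ⊤ := by
  rw [alpha]
  simp only [iInf_eq_top]
  intro m inst q hq
  exfalso
  haveI := inst
  obtain ⟨hm, hfr, hne, hbill⟩ := hq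
  choose lam nv hlam hnv hsupp heq using hbill
  -- separation of z from K
  obtain ⟨f, u0, hfu, huz⟩ := geometric_hahn_banach_closed_point hKconv hKcomp.isClosed hz
  set e : EuclideanSpace ℝ (Fin 2) := (InnerProductSpace.toDual ℝ _).symm f with he
  set δ : ℝ := f z - u0 with hδdef
  have hδ : 0 < δ := sub_pos.2 huz
  have hsep : ∀ x ∈ K, ⟪x - z, e⟫ ≤ -δ := by
    intro x hx
    have h1 : ⟪e, x - z⟫ = f (x - z) := InnerProductSpace.toDual_symm_apply
    rw [real_inner_comm, h1, map_sub]
    have := hfu x hx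
    simp only [hδdef]
    linarith
  obtain ⟨r, hr⟩ := hKcomp.isBounded.subset_closedBall z
  set R : ℝ := max r 1 with hRdef
  have hR : 0 < R := lt_of_lt_of_le one_pos (le_max_right _ _)
  have hbound : ∀ x ∈ K, ‖x - z‖ ≤ R := by
    intro x hx
    have h := hr hx
    rw [Metric.mem_closedBall, dist_eq_norm] at h
    exact h.trans (le_max_left _ _)
  -- the polar body is closed
  have hclosed : IsClosed (polarBody K z) := by
    have hP : polarBody K z = ⋂ x ∈ K, {y | ⟪x - z, y⟫ ≤ (1 : ℝ)} := by
      ext y; simp [polarBody, Set.mem_iInter]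
    rw [hP]
    exact isClosed_biInter fun x _ =>
      isClosed_le (Continuous.inner continuous_const continuous_id) continuous_const
  have hqmem : ∀ i, q i ∈ polarBody K z := fun i =>
    hclosed.closure_eq ▸ frontier_subset_closure (hfr i)
  -- any recession direction of the polar body is orthogonal to all the normals
  have key : ∀ u : EuclideanSpace ℝ (Fin 2), (∀ x ∈ K, ⟪x - z, u⟫ ≤ 0) →
      ∀ i : ZMod m, ⟪u, nv i⟫ = 0 := by
    intro u hu
    have hle : ∀ i : ZMod m, ⟪u, nv i⟫ ≤ 0 := by
      intro i
      have hmem : q i + u ∈ polarBody K z := by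
        simp only [polarBody, Set.mem_setOf_eq]
        intro x hx
        have h1 : ⟪x - z, q i⟫ ≤ 1 := hqmem i x hx
        have h2 := hu x hx
        rw [inner_add_right]
        linarith
      have h := hsupp i (q i + u) hmem
      rwa [add_sub_cancel_left] at h
    set V : ZMod m → EuclideanSpace ℝ (Fin 2) :=
      fun i => ‖q (i + 1) - q i‖⁻¹ • (q (i + 1) - q i) with hV
    have heq' : ∀ i, V i - V (i - 1) = -(lam i • nv i) := by
      intro i
      have h := heq i
      simp only [hV, sub_add_cancel]
      exact h
    have hsum0 : ∑ i : ZMod m, lam i • nv i = 0 := by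
      have h1 : ∑ i : ZMod m, (V i - V (i - 1)) = 0 := by
        rw [Finset.sum_sub_distrib, sub_eq_zero]
        exact (Fintype.sum_equiv (Equiv.subRight (1 : ZMod m)) _ _ fun i => rfl).symm
      have h2 : ∑ i : ZMod m, (V i - V (i - 1)) = -∑ i : ZMod m, lam i • nv i := by
        rw [← Finset.sum_neg_distrib]
        exact Finset.sum_congr rfl fun i _ => heq' i
      have := h2 ▸ h1
      exact neg_eq_zero.1 this
    have hinner0 : ∑ i : ZMod m, lam i * ⟪u, nv i⟫ = 0 := by
      have h : ⟪u, ∑ i : ZMod m, lam i • nv i⟫ = (0 : ℝ) := by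
        rw [hsum0, inner_zero_right]
      rw [inner_sum] at h
      rw [← h]
      exact Finset.sum_congr rfl fun i _ => (real_inner_smul_right u (nv i) (lam i)).symm
    intro i
    have hterm := (Finset.sum_eq_zero_iff_of_nonpos
      (fun j _ => mul_nonpos_of_nonneg_of_nonpos (hlam j).le (hle j))).1 hinner0 i
      (Finset.mem_univ i)
    rcases mul_eq_zero.1 hterm with h | h
    · exact absurd h (ne_of_gt (hlam i))
    · exact h
  set c : ℝ := δ / R with hc
  have hc0 : 0 < c := div_pos hδ hR
  have h1 : ⟪e, nv 0⟫ = 0 :=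
    key e (fun x hx => (hsep x hx).trans (neg_nonpos.2 hδ.le)) 0
  have h2 : ⟪e + c • nv 0, nv 0⟫ = 0 := by
    refine key _ (fun x hx => ?_) 0
    rw [inner_add_right, real_inner_smul_right]
    have hb := hbound x hx
    have hs := hsep x hx
    have hn : ⟪x - z, nv 0⟫ ≤ R := by
      have := real_inner_le_norm (x - z) (nv 0)
      rw [hnv 0, mul_one] at this
      exact this.trans hb
    have hcR : c * R = δ := div_mul_cancel₀ δ (ne_of_gt hR)
    nlinarith [mul_le_mul_of_nonneg_left hn hc0.le]
  rw [inner_add_left, h1, zero_add, real_inner_smul_left, real_inner_self_eq_norm_sq,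
    hnv 0] at h2
  rw [one_pow, mul_one] at h2
  exact absurd h2 (ne_of_gt hc0)
end
end

section
/- Let K ⊆ ℝⁿ be a convex body, u a unit vector, L > 0 and 0 < a < L, and suppose that the segment with endpoints z + a·u and z + (a − L)·u is contained in K. Then K^z ⊆ {y ∈ ℝⁿ : 1/(a − L) ≤ ⟨y, u⟩ ≤ 1/a}, a slab of width L/(a(L − a)) ≥ 4/L. In particular, if z is the midpoint of a segment of length L contained in K, then K^z is contained in a slab of width 4/L. -/
open scoped ENNReal RealInnerProductSpace Pointwise

noncomputable section

variable {E : Type*} [NormedAddCommGroup E] [InnerProductSpace ℝ E]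

/-- If the segment from `z + a • u` to `z + (a - L) • u` (with `u` a unit
vector, `0 < a < L`) is contained in the convex body `K`, then `K^z` is contained in the
slab `{y : 1/(a-L) ≤ ⟪y, u⟫ ≤ 1/a}`, whose width `L/(a(L-a))` is at least `4/L`. -/
theorem polar_subset_slab_of_segment {n : ℕ} (K : Set (EuclideanSpace ℝ (Fin n)))
    (hKconv : Convex ℝ K) (hKcomp : IsCompact K) (hKint : (interior K).Nonempty)
    (z u : EuclideanSpace ℝ (Fin n)) (hu : ‖u‖ = 1) (a L : ℝ) (ha : 0 < a) (haL : a < L)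
    (hseg : segment ℝ (z + a • u) (z + (a - L) • u) ⊆ K) :
    polarBody K z ⊆ {y | 1 / (a - L) ≤ ⟪y, u⟫ ∧ ⟪y, u⟫ ≤ 1 / a} ∧
      1 / a - 1 / (a - L) = L / (a * (L - a)) ∧
      4 / L ≤ L / (a * (L - a)) := by
  have hL : 0 < L := ha.trans haL
  have hLa : 0 < L - a := by linarith
  have hne : a - L ≠ 0 := by linarith
  refine ⟨?_, by field_simp; ring, ?_⟩
  · intro y hy
    have h1 : ⟪(z + a • u) - z, y⟫ ≤ (1 : ℝ) :=
      hy _ (hseg (left_mem_segment ℝ _ _))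
    have h2 : ⟪(z + (a - L) • u) - z, y⟫ ≤ (1 : ℝ) :=
      hy _ (hseg (right_mem_segment ℝ _ _))
    have e1 : ((z + a • u) - z : EuclideanSpace ℝ (Fin n)) = a • u := by abel
    have e2 : ((z + (a - L) • u) - z : EuclideanSpace ℝ (Fin n)) = (a - L) • u := by abel
    rw [e1, real_inner_smul_left] at h1
    rw [e2, real_inner_smul_left] at h2
    rw [real_inner_comm] at h1 h2
    constructor
    · rw [div_le_iff_of_neg (by linarith)]
      linarith
    · rw [le_div_iff₀ ha]
      linarith
  · rw [div_le_div_iff₀ hL (by positivity)]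
    nlinarith [sq_nonneg (L - 2 * a)]
end
end

section
/- Let K ⊆ ℝⁿ be a convex body, u a unit vector, and 0 < a < w, and suppose K ⊆ {x ∈ ℝⁿ : a − w ≤ ⟨x, u⟩ ≤ a}. Then the polar body K^0 contains the segment with endpoints (1/(a − w))·u and (1/a)·u, which has length w/(a(w − a)) ≥ 4/w. In particular, if K is contained in a slab of width w, then for a suitable point z on a segment through K the polar K^z contains a segment of length at least 4/w. -/
open scoped ENNReal RealInnerProductSpace Pointwise

noncomputable section

variable {E : Type*} [NormedAddCommGroup E] [InnerProductSpace ℝ E]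

theorem convex_polarBody (K : Set E) (z : E) : Convex ℝ (polarBody K z) := by
  simpa only [polarBody, Set.ofPred_forall, innerₛₗ_apply_apply] using
    convex_iInter₂ fun x (_ : x ∈ K) => convex_halfSpace_le (innerₛₗ ℝ (x - z)).isLinear 1

theorem smul_mem_polarBody_zero_iff {K : Set E} {u : E} {c : ℝ} :
    c • u ∈ polarBody K 0 ↔ ∀ x ∈ K, c * ⟪x, u⟫ ≤ 1 := by
  simp only [polarBody, Set.mem_ofPred_eq, sub_zero, real_inner_smul_right]

theorem dist_smul_smul_right {𝕜 F : Type*} [NormedField 𝕜] [SeminormedAddCommGroup F]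
    [NormedSpace 𝕜 F] (s t : 𝕜) (u : F) : dist (s • u) (t • u) = dist s t * ‖u‖ := by
  rw [dist_eq_norm, ← sub_smul, norm_smul, dist_eq_norm]

theorem one_div_sub_one_div_sub_eq {a w : ℝ} (ha : a ≠ 0) (haw : a ≠ w) :
    1 / a - 1 / (a - w) = w / (a * (w - a)) := by
  have : a - w ≠ 0 := sub_ne_zero.mpr haw
  have : w - a ≠ 0 := sub_ne_zero.mpr haw.symm
  field_simp
  ring

/-- AM-GM: `a (w - a) ≤ (w / 2)²`. -/
theorem four_div_le_div_mul_sub {a w : ℝ} (ha : 0 < a) (haw : a < w) :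
    4 / w ≤ w / (a * (w - a)) := by
  rw [div_le_div_iff₀ (ha.trans haw) (mul_pos ha (sub_pos.mpr haw))]
  nlinarith [sq_nonneg (w - 2 * a)]

theorem polar_contains_segment_of_slab_general {n : ℕ} (K : Set (EuclideanSpace ℝ (Fin n)))
    (u : EuclideanSpace ℝ (Fin n)) (hu : ‖u‖ = 1) (a w : ℝ) (ha : 0 < a) (haw : a < w)
    (hslab : K ⊆ {x | a - w ≤ ⟪x, u⟫ ∧ ⟪x, u⟫ ≤ a}) :
    segment ℝ ((1 / (a - w)) • u) ((1 / a) • u) ⊆ polarBody K 0 ∧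
      dist ((1 / (a - w)) • u) ((1 / a) • u) = w / (a * (w - a)) ∧
      4 / w ≤ w / (a * (w - a)) := by
  have hlow : (1 / (a - w)) • u ∈ polarBody K 0 := smul_mem_polarBody_zero_iff.mpr fun x hx => by
    rw [one_div_mul_eq_div, div_le_one_of_neg (by linarith)]
    exact (hslab hx).1
  have hup : (1 / a) • u ∈ polarBody K 0 := smul_mem_polarBody_zero_iff.mpr fun x hx => by
    rw [one_div_mul_eq_div, div_le_one ha]
    exact (hslab hx).2
  refine ⟨(convex_polarBody K 0).segment_subset hlow hup, ?_, four_div_le_div_mul_sub ha haw⟩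
  have hle : 1 / (a - w) ≤ 1 / a :=
    (one_div_neg.mpr (by linarith)).le.trans (one_div_pos.mpr ha).le
  rw [dist_smul_smul_right, hu, mul_one, Real.dist_eq, abs_of_nonpos (sub_nonpos.mpr hle), neg_sub,
    one_div_sub_one_div_sub_eq ha.ne' haw.ne]

/-- If a convex body `K ⊆ ℝⁿ` is contained in the slab
`{x : a - w ≤ ⟪x, u⟫ ≤ a}` (with `u` a unit vector, `0 < a < w`), then the polar body `K^0`
contains the segment with endpoints `(1/(a-w)) • u` and `(1/a) • u`, whose length
`w/(a(w-a))` is at least `4/w`. -/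
theorem polar_contains_segment_of_slab {n : ℕ} (K : Set (EuclideanSpace ℝ (Fin n)))
    (hKconv : Convex ℝ K) (hKcomp : IsCompact K) (hKint : (interior K).Nonempty)
    (u : EuclideanSpace ℝ (Fin n)) (hu : ‖u‖ = 1) (a w : ℝ) (ha : 0 < a) (haw : a < w)
    (hslab : K ⊆ {x | a - w ≤ ⟪x, u⟫ ∧ ⟪x, u⟫ ≤ a}) :
    segment ℝ ((1 / (a - w)) • u) ((1 / a) • u) ⊆ polarBody K 0 ∧
      dist ((1 / (a - w)) • u) ((1 / a) • u) = w / (a * (w - a)) ∧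
      4 / w ≤ w / (a * (w - a)) :=
  polar_contains_segment_of_slab_general K u hu a w ha haw hslab
end
end

section
/- Let K ⊆ ℝⁿ be a convex body and z ∈ K. If K^z has a closed generalized billiard trajectory with exactly two bounce points (a 2-orbit) whose length equals α(K^z), then α(K^z) ≥ 8/diam(K). -/
open scoped ENNReal RealInnerProductSpace Pointwise

noncomputable section

variable {E : Type*} [NormedAddCommGroup E] [InnerProductSpace ℝ E]

/-- If `K ⊆ ℝⁿ` is a convex body, `z ∈ K`, and `α(K^z)` is realized by a
closed generalized billiard trajectory with exactly two bounce points, then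
`α(K^z) ≥ 8 / diam K`. -/
theorem alpha_polar_ge_of_two_orbit {n : ℕ} (K : Set (EuclideanSpace ℝ (Fin n)))
    (hKconv : Convex ℝ K) (hKcomp : IsCompact K) (hKint : (interior K).Nonempty)
    (z : EuclideanSpace ℝ (Fin n)) (hz : z ∈ K)
    (horbit : ∃ q : ZMod 2 → EuclideanSpace ℝ (Fin n),
      IsClosedBilliardTraj (polarBody K z) q ∧
        ENNReal.ofReal (billiardLength q) = alpha (polarBody K z)) :
    8 / ENNReal.ofReal (Metric.diam K) ≤ alpha (polarBody K z) := by
  obtain ⟨q, ⟨-, hfr, hne, hrefl⟩, halpha⟩ := horbit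
  set v : EuclideanSpace ℝ (Fin n) := q 1 - q 0 with hv
  have hvne : v ≠ 0 := sub_ne_zero.mpr (by simpa using hne 0)
  have hvpos : (0:ℝ) < ‖v‖ := norm_pos_iff.mpr hvne
  have hq01 : q 0 - q 1 = -v := by simp [hv]
  -- support condition at q 0
  have hsupp0 : ∀ x ∈ polarBody K z, (0:ℝ) ≤ ⟪x - q 0, v⟫ := by
    obtain ⟨lam, nv, hlam, -, hsupp, heq⟩ := hrefl 0
    rw [show (0 - 1 : ZMod 2) = 1 by decide, show (0 + 1 : ZMod 2) = 1 by decide,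
      hq01, norm_neg] at heq
    have h2 : lam • nv = (-(2 * ‖v‖⁻¹)) • v := by
      have h := congrArg Neg.neg heq
      rw [neg_neg] at h
      rw [← h]; module
    intro x hx
    have h4 : ⟪x - q 0, lam • nv⟫ ≤ (0:ℝ) := by
      rw [real_inner_smul_right]
      exact mul_nonpos_of_nonneg_of_nonpos hlam.le (hsupp x hx)
    rw [h2, real_inner_smul_right] at h4
    nlinarith [inv_pos.mpr hvpos, h4]
  -- support condition at q 1
  have hsupp1 : ∀ x ∈ polarBody K z, ⟪x - q 1, v⟫ ≤ (0:ℝ) := by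
    obtain ⟨lam, nv, hlam, -, hsupp, heq⟩ := hrefl 1
    rw [show (1 - 1 : ZMod 2) = 0 by decide, show (1 + 1 : ZMod 2) = 0 by decide,
      hq01, norm_neg] at heq
    have h2 : lam • nv = (2 * ‖v‖⁻¹) • v := by
      have h := congrArg Neg.neg heq
      rw [neg_neg] at h
      rw [← h]; module
    intro x hx
    have h4 : ⟪x - q 1, lam • nv⟫ ≤ (0:ℝ) := by
      rw [real_inner_smul_right]
      exact mul_nonpos_of_nonneg_of_nonpos hlam.le (hsupp x hx)
    rw [h2, real_inner_smul_right] at h4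
    nlinarith [inv_pos.mpr hvpos, h4]
  have hKne : K.Nonempty := ⟨z, hz⟩
  have hca : Continuous fun x : EuclideanSpace ℝ (Fin n) => ⟪x - z, v⟫ :=
    (continuous_id.sub continuous_const).inner continuous_const
  have hcb : Continuous fun x : EuclideanSpace ℝ (Fin n) => ⟪z - x, v⟫ :=
    (continuous_const.sub continuous_id).inner continuous_const
  obtain ⟨xa, hxa, hxamax⟩ := hKcomp.exists_isMaxOn hKne hca.continuousOn
  obtain ⟨xb, hxb, hxbmax⟩ := hKcomp.exists_isMaxOn hKne hcb.continuousOn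
  replace hxamax : ∀ x ∈ K, ⟪x - z, v⟫ ≤ ⟪xa - z, v⟫ := fun x hx => hxamax hx
  replace hxbmax : ∀ x ∈ K, ⟪z - x, v⟫ ≤ ⟪z - xb, v⟫ := fun x hx => hxbmax hx
  set A : ℝ := ⟪xa - z, v⟫ with hA
  set B : ℝ := ⟪z - xb, v⟫ with hB
  have hA0 : 0 ≤ A := by simpa using hxamax z hz
  have hB0 : 0 ≤ B := by simpa using hxbmax z hz
  have hvv : ⟪v, v⟫ = ‖v‖ ^ 2 := real_inner_self_eq_norm_sq v
  -- A > 0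
  have hApos : 0 < A := by
    rcases hA0.lt_or_eq with h | h
    · exact h
    · exfalso
      set t : ℝ := (|⟪q 1, v⟫| + 1) / ‖v‖ ^ 2 with ht
      have htpos : 0 < t := by positivity
      have hmem : t • v ∈ polarBody K z := by
        intro x hx
        have h1 : ⟪x - z, v⟫ ≤ 0 := le_trans (hxamax x hx) h.symm.le
        rw [real_inner_smul_right]
        nlinarith
      have h2 := hsupp1 _ hmem
      rw [inner_sub_left, real_inner_smul_left, hvv] at h2
      have h3 : t * ‖v‖ ^ 2 = |⟪q 1, v⟫| + 1 := by
        rw [ht]; field_simp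
      have := le_abs_self ⟪q 1, v⟫
      linarith
  -- B > 0
  have hBpos : 0 < B := by
    rcases hB0.lt_or_eq with h | h
    · exact h
    · exfalso
      set t : ℝ := (|⟪q 0, v⟫| + 1) / ‖v‖ ^ 2 with ht
      have htpos : 0 < t := by positivity
      have hmem : (-t) • v ∈ polarBody K z := by
        intro x hx
        have h1 : ⟪z - x, v⟫ ≤ 0 := le_trans (hxbmax x hx) h.symm.le
        have h1' : 0 ≤ ⟪x - z, v⟫ := by
          rw [inner_sub_left] at h1 ⊢; linarith
        rw [real_inner_smul_right]
        nlinarith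
      have h2 := hsupp0 _ hmem
      rw [inner_sub_left, real_inner_smul_left, hvv] at h2
      have h3 : t * ‖v‖ ^ 2 = |⟪q 0, v⟫| + 1 := by
        rw [ht]; field_simp
      have := neg_abs_le ⟪q 0, v⟫
      linarith
  -- the two polar points
  have hmem1 : A⁻¹ • v ∈ polarBody K z := by
    intro x hx
    rw [real_inner_smul_right]
    calc A⁻¹ * ⟪x - z, v⟫ ≤ A⁻¹ * A :=
          mul_le_mul_of_nonneg_left (hxamax x hx) (inv_pos.mpr hApos).le
      _ = 1 := inv_mul_cancel₀ hApos.ne'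
  have hmem0 : (-B⁻¹) • v ∈ polarBody K z := by
    intro x hx
    rw [real_inner_smul_right]
    have hzx : -⟪x - z, v⟫ = ⟪z - x, v⟫ := by rw [inner_sub_left, inner_sub_left]; ring
    calc (-B⁻¹) * ⟪x - z, v⟫ = B⁻¹ * ⟪z - x, v⟫ := by rw [← hzx]; ring
      _ ≤ B⁻¹ * B := mul_le_mul_of_nonneg_left (hxbmax x hx) (inv_pos.mpr hBpos).le
      _ = 1 := inv_mul_cancel₀ hBpos.ne'
  have h1 := hsupp1 _ hmem1
  have h0 := hsupp0 _ hmem0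
  rw [inner_sub_left, real_inner_smul_left, hvv] at h1 h0
  -- width identity
  have hkey : ⟪q 1, v⟫ - ⟪q 0, v⟫ = ‖v‖ ^ 2 := by
    rw [← inner_sub_left, ← hv, hvv]
  have hinv : A⁻¹ + B⁻¹ ≤ 1 := by
    have hv2 : (0:ℝ) < ‖v‖ ^ 2 := by positivity
    nlinarith
  -- A + B ≤ diam K * ‖v‖
  have hAB : A + B ≤ Metric.diam K * ‖v‖ := by
    have e : A + B = ⟪xa - xb, v⟫ := by
      rw [hA, hB, inner_sub_left, inner_sub_left, inner_sub_left]; ring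
    have h2 : ⟪xa - xb, v⟫ ≤ ‖xa - xb‖ * ‖v‖ := real_inner_le_norm _ _
    have h3 : ‖xa - xb‖ ≤ Metric.diam K := by
      rw [← dist_eq_norm]
      exact Metric.dist_le_diam_of_mem hKcomp.isBounded hxa hxb
    calc A + B = ⟪xa - xb, v⟫ := e
      _ ≤ ‖xa - xb‖ * ‖v‖ := h2
      _ ≤ Metric.diam K * ‖v‖ := by
          exact mul_le_mul_of_nonneg_right h3 hvpos.le
  -- AM-HM
  have hsumAB : A + B ≤ A * B := by
    have h := mul_le_mul_of_nonneg_left hinv (mul_pos hApos hBpos).le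
    have e1 : A * B * A⁻¹ = B := by rw [mul_comm A B, mul_assoc, mul_inv_cancel₀ hApos.ne', mul_one]
    have e2 : A * B * B⁻¹ = A := by rw [mul_assoc, mul_inv_cancel₀ hBpos.ne', mul_one]
    rw [mul_add, mul_one, e1, e2] at h
    linarith
  have hmain : 4 ≤ Metric.diam K * ‖v‖ := by
    have h4 : 4 ≤ A + B := by nlinarith [sq_nonneg (A - B)]
    linarith
  have hD : 0 < Metric.diam K := by
    have h0 : 0 < Metric.diam K * ‖v‖ := by linarith
    rcases mul_pos_iff.mp h0 with ⟨h, -⟩ | ⟨-, h⟩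
    · exact h
    · linarith
  have hL : billiardLength q = 2 * ‖v‖ := by
    have e : billiardLength q = ‖q (0 + 1) - q 0‖ + ‖q (1 + 1) - q 1‖ := by
      rw [billiardLength, show (Finset.univ : Finset (ZMod 2)) = {0, 1} by decide,
        Finset.sum_pair (by decide)]
    rw [e, show (0 + 1 : ZMod 2) = 1 by decide, show (1 + 1 : ZMod 2) = 0 by decide,
      hq01, norm_neg, ← hv]
    ring
  have h8 : 8 / Metric.diam K ≤ billiardLength q := by
    rw [hL, div_le_iff₀ hD, show 2 * ‖v‖ * Metric.diam K = 2 * (Metric.diam K * ‖v‖) from by ring]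
    linarith
  rw [← halpha]
  calc (8 : ℝ≥0∞) / ENNReal.ofReal (Metric.diam K)
      = ENNReal.ofReal (8 / Metric.diam K) := by
        rw [ENNReal.ofReal_div_of_pos hD, ENNReal.ofReal_ofNat]
    _ ≤ ENNReal.ofReal (billiardLength q) := ENNReal.ofReal_le_ofReal h8
end
end
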